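/- arXiv:math/0609385 — 6 statements merged into one kernel-verified Lean document; each statement's English description precedes it below -/
import Mathlib

section
/- Let Ψ be a random analytic function on a disc B(w, r) ⊆ ℂ (i.e., a measurable map into the space of analytic functions on B(w,r)). Then for every s > 0 there exists a constant C > 0 (depending only on s) such that E[sup_{z ∈ B(w, r/2)} |Ψ(z)|^s] ≤ C · sup_{z ∈ B(w, r)} E|Ψ(z)|^s. -/
open MeasureTheory Metric ENNReal

open Set Real

/-!
For `0 < s ≤ 1`, let `z₀` maximize `G y = (R - |y - w|)² |F y|^s` over the closed disc `B̄(w, R)`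
and let `ρ` be half the distance from `z₀` to the boundary circle. Maximality gives
`|F| ≤ 4^(1/s) |F z₀| =: L` on `B(z₀, ρ)`, so the area mean-value inequality for `|F|` yields
`π ρ² |F z₀| ≤ ∫_{B(z₀,ρ)} |F| ≤ L^(1-s) ∫_{B(w,R)} |F|^s`, i.e.
`G z₀ ≤ (4^(1/s) / π) ∫_{B(w,R)} |F|^s`.
This replaces the subharmonicity of `|F|^s`; larger `s` reduce to this case through `F ^ ⌈s⌉`.
With `R = 3r/4`, taking expectations and exchanging them with the area integral bounds
`E sup_{B(w,r/2)} |Ψ|^s` by `9 · 4^(⌈s⌉/s) · sup_{B(w,r)} E|Ψ|^s`.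
-/

theorem le_rpow_one_sub_mul_rpow {b L s : ℝ} (hb : 0 ≤ b) (hbL : b ≤ L) (hs1 : s ≤ 1) :
    b ≤ L ^ (1 - s) * b ^ s := by
  calc b = b ^ (1 - s) * b ^ s := by
        rw [← Real.rpow_add' hb (by simp)]
        simp
    _ ≤ L ^ (1 - s) * b ^ s := by gcongr

theorem enorm_rpow_eq_ofReal {E : Type*} [NormedAddCommGroup E] {s : ℝ} (hs : 0 ≤ s) (x : E) :
    ‖x‖ₑ ^ s = ENNReal.ofReal (‖x‖ ^ s) := by
  rw [← ofReal_norm, ENNReal.ofReal_rpow_of_nonneg (norm_nonneg x) hs]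

theorem setLIntegral_Ioo_zero_ofReal {ρ : ℝ} (hρ : 0 ≤ ρ) :
    ∫⁻ t in Ioo 0 ρ, ENNReal.ofReal t = ENNReal.ofReal (ρ ^ 2 / 2) := by
  rw [← ofReal_integral_eq_lintegral_ofReal, integral_Ioc_eq_integral_Ioo.symm,
    ← intervalIntegral.integral_of_le hρ, integral_id]
  · ring_nf
  · exact continuous_id.integrableOn_Icc.mono_set Ioo_subset_Icc_self
  · exact (ae_restrict_mem measurableSet_Ioo).mono fun t ht ↦ ht.1.le

theorem setLIntegral_circleMap_le_setLIntegral_ball (f : ℂ → ℝ≥0∞) (c : ℂ) (ρ : ℝ) :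
    ∫⁻ p in Ioo 0 ρ ×ˢ Ioo (-π) π, ENNReal.ofReal p.1 * f (circleMap c p.1 p.2) ≤
      ∫⁻ y in ball c ρ, f y := by
  set g : ℂ → ℝ≥0∞ := fun y ↦ (ball c ρ).indicator f (c + y)
  have hg : ∀ p ∈ Ioo 0 ρ ×ˢ Ioo (-π) π,
      ENNReal.ofReal p.1 * f (circleMap c p.1 p.2) =
        ENNReal.ofReal p.1 • g (Complex.polarCoord.symm p) := by
    rintro ⟨t, θ⟩ ⟨ht, -⟩
    have hpolar : c + Complex.polarCoord.symm (t, θ) = circleMap c t θ := by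
      rw [Complex.polarCoord_symm_apply, circleMap, Complex.exp_mul_I]
      push_cast
      ring
    have hmem : circleMap c t θ ∈ ball c ρ := by
      rw [mem_ball, dist_eq_norm, circleMap_sub_center, norm_circleMap_zero, abs_of_pos ht.1]
      exact ht.2
    simp only [smul_eq_mul, g, hpolar, indicator_of_mem hmem]
  calc _ = ∫⁻ p in Ioo 0 ρ ×ˢ Ioo (-π) π, ENNReal.ofReal p.1 • g (Complex.polarCoord.symm p) :=
        setLIntegral_congr_fun (measurableSet_Ioo.prod measurableSet_Ioo) hg
    _ ≤ ∫⁻ p in polarCoord.target, ENNReal.ofReal p.1 • g (Complex.polarCoord.symm p) := by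
        rw [polarCoord_target]
        exact lintegral_mono_set (prod_mono Ioo_subset_Ioi_self subset_rfl)
    _ = ∫⁻ y in ball c ρ, f y := by
        rw [Complex.lintegral_comp_polarCoord_symm, lintegral_add_left_eq_self,
          lintegral_indicator measurableSet_ball]

section MeanValue

variable {E : Type*} [NormedAddCommGroup E] [NormedSpace ℂ E] [CompleteSpace E]
  {F : ℂ → E} {c : ℂ} {t ρ : ℝ}

theorem ofReal_two_pi_mul_enorm_le_lintegral_circleMap (ht : 0 ≤ t)
    (hF : DiffContOnCl ℂ F (ball c t)) :
    ENNReal.ofReal (2 * π) * ‖F c‖ₑ ≤ ∫⁻ θ in Ioo (-π) π, ‖F (circleMap c t θ)‖ₑ := by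
  have hperiodic : (fun θ ↦ F (circleMap c t θ)).Periodic (2 * π) := fun θ ↦ by
    simp [periodic_circleMap c t θ]
  rw [← abs_of_nonneg ht] at hF
  have hmean : (2 * π : ℝ) • F c = ∫ θ in (-π)..π, F (circleMap c t θ) := by
    rw [← hF.circleAverage, circleAverage_def, smul_inv_smul₀ (by positivity),
      ← zero_add (2 * π), hperiodic.intervalIntegral_add_eq 0 (-π), neg_add_eq_sub, two_mul,
      add_sub_cancel_right]
  calc ENNReal.ofReal (2 * π) * ‖F c‖ₑ = ‖∫ θ in (-π)..π, F (circleMap c t θ)‖ₑ := by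
        rw [← hmean, enorm_smul, Real.enorm_of_nonneg (by positivity)]
    _ ≤ ∫⁻ θ in Ioc (-π) π, ‖F (circleMap c t θ)‖ₑ := by
        rw [intervalIntegral.integral_of_le (by linarith [pi_pos])]
        exact enorm_integral_le_lintegral_enorm _
    _ = ∫⁻ θ in Ioo (-π) π, ‖F (circleMap c t θ)‖ₑ := setLIntegral_congr Ioo_ae_eq_Ioc.symm

theorem ofReal_pi_mul_sq_mul_enorm_le_setLIntegral_ball (hρ : 0 ≤ ρ)
    (hF : DifferentiableOn ℂ F (ball c ρ)) :
    ENNReal.ofReal (π * ρ ^ 2) * ‖F c‖ₑ ≤ ∫⁻ y in ball c ρ, ‖F y‖ₑ := by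
  have hcircle : ∀ t ∈ Ioo 0 ρ, ENNReal.ofReal (2 * π) * ‖F c‖ₑ ≤
      ∫⁻ θ in Ioo (-π) π, ‖F (circleMap c t θ)‖ₑ := fun t ht ↦
    ofReal_two_pi_mul_enorm_le_lintegral_circleMap ht.1.le
      (hF.diffContOnCl_ball (closedBall_subset_ball ht.2))
  have hmeas : AEMeasurable (fun p : ℝ × ℝ ↦ ENNReal.ofReal p.1 * ‖F (circleMap c p.1 p.2)‖ₑ)
      ((volume.prod volume).restrict (Ioo 0 ρ ×ˢ Ioo (-π) π)) := by
    refine measurable_fst.ennreal_ofReal.aemeasurable.mul (ContinuousOn.aemeasurable ?_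
      (measurableSet_Ioo.prod measurableSet_Ioo))
    refine continuous_enorm.comp_continuousOn (hF.continuousOn.comp (by fun_prop) ?_)
    rintro ⟨t, θ⟩ ⟨ht, -⟩
    rw [mem_ball, dist_eq_norm, circleMap_sub_center, norm_circleMap_zero, abs_of_pos ht.1]
    exact ht.2
  calc ENNReal.ofReal (π * ρ ^ 2) * ‖F c‖ₑ
      = ∫⁻ t in Ioo 0 ρ, ENNReal.ofReal t * (ENNReal.ofReal (2 * π) * ‖F c‖ₑ) := by
        rw [lintegral_mul_const _ ENNReal.measurable_ofReal, setLIntegral_Ioo_zero_ofReal hρ,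
          ← mul_assoc, ← ENNReal.ofReal_mul (by positivity)]
        congr 2
        ring
    _ ≤ ∫⁻ t in Ioo 0 ρ, ∫⁻ θ in Ioo (-π) π, ENNReal.ofReal t * ‖F (circleMap c t θ)‖ₑ := by
        refine setLIntegral_mono' measurableSet_Ioo fun t ht ↦ ?_
        rw [lintegral_const_mul' _ _ ofReal_ne_top]
        gcongr
        exact hcircle t ht
    _ = ∫⁻ p in Ioo 0 ρ ×ˢ Ioo (-π) π, ENNReal.ofReal p.1 * ‖F (circleMap c p.1 p.2)‖ₑ := by
        rw [Measure.volume_eq_prod, setLIntegral_prod _ hmeas]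
    _ ≤ ∫⁻ y in ball c ρ, ‖F y‖ₑ := setLIntegral_circleMap_le_setLIntegral_ball _ c ρ

theorem ofReal_pi_mul_sq_mul_enorm_le_of_norm_le {s L : ℝ} (hs : 0 ≤ s) (hs1 : s ≤ 1)
    (hρ : 0 ≤ ρ) (hF : DifferentiableOn ℂ F (ball c ρ)) (hL : ∀ y ∈ ball c ρ, ‖F y‖ ≤ L) :
    ENNReal.ofReal (π * ρ ^ 2) * ‖F c‖ₑ ≤
      ENNReal.ofReal (L ^ (1 - s)) * ∫⁻ y in ball c ρ, ‖F y‖ₑ ^ s := by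
  calc ENNReal.ofReal (π * ρ ^ 2) * ‖F c‖ₑ ≤ ∫⁻ y in ball c ρ, ‖F y‖ₑ :=
        ofReal_pi_mul_sq_mul_enorm_le_setLIntegral_ball hρ hF
    _ ≤ ∫⁻ y in ball c ρ, ENNReal.ofReal (L ^ (1 - s)) * ‖F y‖ₑ ^ s := by
        refine setLIntegral_mono' measurableSet_ball fun y hy ↦ ?_
        rw [enorm_rpow_eq_ofReal hs, ← ofReal_norm, mul_comm, ← ENNReal.ofReal_mul (by positivity),
          mul_comm]
        exact ENNReal.ofReal_le_ofReal (le_rpow_one_sub_mul_rpow (norm_nonneg _) (hL y hy) hs1)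
    _ = ENNReal.ofReal (L ^ (1 - s)) * ∫⁻ y in ball c ρ, ‖F y‖ₑ ^ s :=
        lintegral_const_mul' _ _ ofReal_ne_top

end MeanValue

theorem ofReal_four_mul_sq_mul_rpow_le {a ρ s : ℝ} {A : ℝ≥0∞} (hs : 0 < s) (ha : 0 < a)
    (h : ENNReal.ofReal (π * ρ ^ 2 * a) ≤ ENNReal.ofReal ((4 ^ s⁻¹ * a) ^ (1 - s)) * A) :
    ENNReal.ofReal (4 * ρ ^ 2 * a ^ s) ≤ ENNReal.ofReal (4 ^ s⁻¹ / π) * A := by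
  have hpow : a ^ (s - 1) * a ^ (1 - s) = 1 := by rw [← Real.rpow_add ha]; simp
  have hfour : 4 * (4 : ℝ) ^ (s⁻¹ * (1 - s)) = 4 ^ s⁻¹ := by
    rw [mul_one_sub, inv_mul_cancel₀ hs.ne', Real.rpow_sub (by norm_num), Real.rpow_one]
    field_simp
  calc ENNReal.ofReal (4 * ρ ^ 2 * a ^ s)
      = ENNReal.ofReal (4 * a ^ (s - 1) / π) * ENNReal.ofReal (π * ρ ^ 2 * a) := by
        rw [← ENNReal.ofReal_mul (by positivity), Real.rpow_sub_one ha.ne']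
        congr 1
        field_simp
    _ ≤ ENNReal.ofReal (4 * a ^ (s - 1) / π) * (ENNReal.ofReal ((4 ^ s⁻¹ * a) ^ (1 - s)) * A) := by
        gcongr
    _ = ENNReal.ofReal (4 ^ s⁻¹ / π) * A := by
        rw [← mul_assoc, ← ENNReal.ofReal_mul (by positivity), Real.mul_rpow (by positivity) ha.le,
          ← Real.rpow_mul (by norm_num)]
        congr 2
        calc _ = 4 * (4 : ℝ) ^ (s⁻¹ * (1 - s)) * (a ^ (s - 1) * a ^ (1 - s)) / π := by ring
          _ = 4 ^ s⁻¹ / π := by rw [hpow, hfour, mul_one]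

section PointwiseBound

variable {E : Type*} [NormedAddCommGroup E] {F : ℂ → E} {w z z₀ : ℂ} {R s : ℝ}

theorem norm_le_of_isMaxOn_sq_mul_rpow (hs : 0 < s)
    (hmax : IsMaxOn (fun y ↦ (R - dist y w) ^ 2 * ‖F y‖ ^ s) (closedBall w R) z₀)
    (hz : dist z z₀ < (R - dist z₀ w) / 2) :
    ‖F z‖ ≤ 4 ^ s⁻¹ * ‖F z₀‖ := by
  set ρ := (R - dist z₀ w) / 2
  have hρ : 0 < ρ := dist_nonneg.trans_lt hz
  have hρz : ρ ≤ R - dist z w := by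
    have := dist_triangle z z₀ w
    simp only [ρ] at hz ⊢
    linarith
  have hzR : z ∈ closedBall w R := mem_closedBall.2 (by linarith)
  have hGz : ρ ^ 2 * ‖F z‖ ^ s ≤ ρ ^ 2 * (4 ^ s⁻¹ * ‖F z₀‖) ^ s :=
    calc ρ ^ 2 * ‖F z‖ ^ s ≤ (R - dist z w) ^ 2 * ‖F z‖ ^ s := by gcongr
      _ ≤ (R - dist z₀ w) ^ 2 * ‖F z₀‖ ^ s := hmax hzR
      _ = ρ ^ 2 * (4 ^ s⁻¹ * ‖F z₀‖) ^ s := by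
        rw [Real.mul_rpow (by positivity) (norm_nonneg _), ← Real.rpow_mul (by norm_num),
          inv_mul_cancel₀ hs.ne', Real.rpow_one]
        ring
  exact (Real.rpow_le_rpow_iff (norm_nonneg _) (by positivity) hs).1
    (le_of_mul_le_mul_left hGz (by positivity))

variable [NormedSpace ℂ E] [CompleteSpace E]

theorem ofReal_sq_mul_enorm_rpow_le_of_le_one (hs : 0 < s) (hs1 : s ≤ 1)
    (hF : DiffContOnCl ℂ F (ball w R)) (hz : z ∈ ball w R) :
    ENNReal.ofReal ((R - dist z w) ^ 2) * ‖F z‖ₑ ^ s ≤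
      ENNReal.ofReal (4 ^ s⁻¹ / π) * ∫⁻ y in ball w R, ‖F y‖ₑ ^ s := by
  set G : ℂ → ℝ := fun y ↦ (R - dist y w) ^ 2 * ‖F y‖ ^ s
  have hG : ContinuousOn G (closedBall w R) := by
    rw [← closure_ball w (pos_of_mem_ball hz).ne']
    exact ((continuousOn_const.sub (continuous_id.dist continuous_const).continuousOn).pow 2).mul
      (hF.continuousOn.norm.rpow_const fun _ _ ↦ Or.inr hs.le)
  obtain ⟨z₀, hz₀, hmax⟩ :=
    (isCompact_closedBall w R).exists_isMaxOn ⟨z, ball_subset_closedBall hz⟩ hG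
  rw [enorm_rpow_eq_ofReal hs.le, ← ENNReal.ofReal_mul (by positivity)]
  refine (ENNReal.ofReal_le_ofReal (hmax (ball_subset_closedBall hz))).trans ?_
  rcases le_or_gt (G z₀) 0 with hM | hM
  · simp [ENNReal.ofReal_of_nonpos hM]
  set a := ‖F z₀‖
  set ρ := (R - dist z₀ w) / 2
  have hρ : 0 < ρ := by
    have h1 : 0 ≤ R - dist z₀ w := sub_nonneg.2 (mem_closedBall.1 hz₀)
    have h2 : R - dist z₀ w ≠ 0 := fun h ↦ by simp [G, h] at hM
    simp only [ρ]
    positivity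
  have ha : 0 < a := (norm_nonneg _).lt_of_ne fun h ↦ by
    simp [G, ← h, Real.zero_rpow hs.ne'] at hM
  have hsub : ball z₀ ρ ⊆ ball w R := ball_subset_ball' (by simp only [ρ] at hρ ⊢; linarith)
  set L := (4 : ℝ) ^ s⁻¹ * a
  have harea : ENNReal.ofReal (π * ρ ^ 2 * a) ≤
      ENNReal.ofReal (L ^ (1 - s)) * ∫⁻ y in ball w R, ‖F y‖ₑ ^ s := by
    rw [ENNReal.ofReal_mul (by positivity), ofReal_norm]
    calc _ ≤ ENNReal.ofReal (L ^ (1 - s)) * ∫⁻ y in ball z₀ ρ, ‖F y‖ₑ ^ s :=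
          ofReal_pi_mul_sq_mul_enorm_le_of_norm_le hs.le hs1 hρ.le
            (hF.differentiableOn.mono hsub)
            fun y hy ↦ norm_le_of_isMaxOn_sq_mul_rpow hs hmax (mem_ball.1 hy)
      _ ≤ _ := by gcongr
  calc ENNReal.ofReal (G z₀) = ENNReal.ofReal (4 * ρ ^ 2 * a ^ s) := by
        simp only [G, ρ, a]
        ring_nf
    _ ≤ _ := ofReal_four_mul_sq_mul_rpow_le hs ha harea

end PointwiseBound

theorem iSup_enorm_rpow_le_lintegral_ball {F : ℂ → ℂ} {w : ℂ} {r R s : ℝ} (hs : 0 < s)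
    (hrR : r < R) (hF : DiffContOnCl ℂ F (ball w R)) :
    ⨆ z ∈ ball w r, ‖F z‖ₑ ^ s ≤
      ENNReal.ofReal (4 ^ (⌈s⌉₊ / s) / π / (R - r) ^ 2) * ∫⁻ y in ball w R, ‖F y‖ₑ ^ s := by
  refine iSup₂_le fun z hz ↦ ?_
  set m := ⌈s⌉₊
  have hm : (0 : ℝ) < m := Nat.cast_pos.2 (Nat.ceil_pos.2 hs)
  -- `F ^ m` brings the exponent `s / m` into `(0, 1]`
  have hpow : ∀ y, ‖F y ^ m‖ₑ ^ (s / m) = ‖F y‖ₑ ^ s := fun y ↦ by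
    rw [enorm_pow, ← ENNReal.rpow_natCast, ← ENNReal.rpow_mul, mul_div_cancel₀ _ hm.ne']
  have key := ofReal_sq_mul_enorm_rpow_le_of_le_one (F := fun y ↦ F y ^ m) (div_pos hs hm)
    (div_le_one_of_le₀ (Nat.le_ceil s) hm.le)
    ⟨hF.differentiableOn.pow m, hF.continuousOn.pow m⟩ (ball_subset_ball hrR.le hz)
  simp only [hpow, inv_div] at key
  have hrR2 : 0 < (R - r) ^ 2 := by nlinarith
  rw [ENNReal.ofReal_div_of_pos hrR2, ← ENNReal.mul_div_right_comm,
    ENNReal.le_div_iff_mul_le (Or.inl (ENNReal.ofReal_pos.2 hrR2).ne') (Or.inl ofReal_ne_top),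
    mul_comm]
  calc ENNReal.ofReal ((R - r) ^ 2) * ‖F z‖ₑ ^ s
      ≤ ENNReal.ofReal ((R - dist z w) ^ 2) * ‖F z‖ₑ ^ s := by
        have := mem_ball.1 hz
        gcongr
    _ ≤ _ := key

section Retraction

variable {E : Type*} [NormedAddCommGroup E] [NormedSpace ℝ E] {c x : E} {R : ℝ}

noncomputable def radialRetraction (c : E) (R : ℝ) (x : E) : E :=
  c + (R / max R ‖x - c‖) • (x - c)

theorem continuous_radialRetraction (hR : 0 < R) : Continuous (radialRetraction c R) :=
  continuous_const.add <| (continuous_const.div (by fun_prop)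
    fun _ ↦ (lt_max_of_lt_left hR).ne').smul (by fun_prop)

theorem radialRetraction_mem_closedBall (hR : 0 < R) (x : E) :
    radialRetraction c R x ∈ closedBall c R := by
  have hmax : 0 < max R ‖x - c‖ := lt_max_of_lt_left hR
  rw [mem_closedBall, dist_eq_norm, radialRetraction, add_sub_cancel_left, norm_smul,
    norm_div, Real.norm_of_nonneg hR.le, Real.norm_of_nonneg hmax.le, div_mul_eq_mul_div,
    div_le_iff₀ hmax]
  gcongr
  exact le_max_right _ _

theorem radialRetraction_eq_self (hx : x ∈ closedBall c R) : radialRetraction c R x = x := by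
  rw [mem_closedBall, dist_eq_norm] at hx
  rcases eq_or_ne R 0 with rfl | hR
  · obtain rfl := sub_eq_zero.1 (norm_le_zero_iff.1 hx)
    simp [radialRetraction]
  · rw [radialRetraction, max_eq_left hx, div_self hR, one_smul, add_sub_cancel]

end Retraction

theorem lintegral_setLIntegral_ball_comm {Ω E G : Type*} [MeasurableSpace Ω] {P : Measure Ω}
    [SFinite P] [NormedAddCommGroup E] [NormedSpace ℝ E] [MeasurableSpace E] [BorelSpace E]
    [SecondCountableTopology E] {μ : Measure E} [SFinite μ] [TopologicalSpace G]
    [TopologicalSpace.PseudoMetrizableSpace G] [MeasurableSpace G] [BorelSpace G] {c : E} {R : ℝ}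
    (hR : 0 < R)
    {Ψ : Ω → E → G} (hcont : ∀ ω, ContinuousOn (Ψ ω) (closedBall c R))
    (hmeas : ∀ y ∈ closedBall c R, Measurable fun ω ↦ Ψ ω y) {g : G → ℝ≥0∞} (hg : Measurable g) :
    ∫⁻ ω, ∫⁻ y in ball c R, g (Ψ ω y) ∂μ ∂P = ∫⁻ y in ball c R, ∫⁻ ω, g (Ψ ω y) ∂P ∂μ := by
  -- extending `Ψ ω` continuously off the ball makes it jointly measurable
  set Φ : Ω → E → G := fun ω y ↦ Ψ ω (radialRetraction c R y)
  have hΦ : Measurable fun p : Ω × E ↦ g (Φ p.1 p.2) :=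
    hg.comp <| (measurable_uncurry_of_continuous_of_measurable (u := fun y ω ↦ Φ ω y)
      (fun ω ↦ (hcont ω).comp_continuous (continuous_radialRetraction hR)
        (radialRetraction_mem_closedBall hR))
      fun y ↦ hmeas _ (radialRetraction_mem_closedBall hR y)).comp measurable_swap
  have hΦΨ : ∀ ω, ∀ y ∈ ball c R, Φ ω y = Ψ ω y := fun ω y hy ↦ by
    simp only [Φ, radialRetraction_eq_self (ball_subset_closedBall hy)]
  calc ∫⁻ ω, ∫⁻ y in ball c R, g (Ψ ω y) ∂μ ∂P = ∫⁻ ω, ∫⁻ y in ball c R, g (Φ ω y) ∂μ ∂P :=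
        lintegral_congr fun ω ↦ setLIntegral_congr_fun measurableSet_ball fun y hy ↦ by
          rw [hΦΨ ω y hy]
    _ = ∫⁻ y in ball c R, ∫⁻ ω, g (Φ ω y) ∂P ∂μ := lintegral_lintegral_swap hΦ.aemeasurable
    _ = ∫⁻ y in ball c R, ∫⁻ ω, g (Ψ ω y) ∂P ∂μ :=
        setLIntegral_congr_fun measurableSet_ball fun y hy ↦ lintegral_congr fun ω ↦ by
          rw [hΦΨ ω y hy]

theorem lintegral_iSup_enorm_rpow_le {Ω : Type*} [MeasurableSpace Ω] {P : Measure Ω} [SFinite P]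
    {Ψ : Ω → ℂ → ℂ} {w : ℂ} {r R s : ℝ} (hs : 0 < s) (hR : 0 < R) (hrR : r < R)
    (hΨ : ∀ ω, DiffContOnCl ℂ (Ψ ω) (ball w R))
    (hmeas : ∀ z ∈ closedBall w R, Measurable fun ω ↦ Ψ ω z) :
    ∫⁻ ω, ⨆ z ∈ ball w r, ‖Ψ ω z‖ₑ ^ s ∂P ≤
      ENNReal.ofReal (4 ^ (⌈s⌉₊ / s) / π / (R - r) ^ 2) * volume (ball w R) *
        ⨆ z ∈ ball w R, ∫⁻ ω, ‖Ψ ω z‖ₑ ^ s ∂P := by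
  set κ := ENNReal.ofReal (4 ^ (⌈s⌉₊ / s) / π / (R - r) ^ 2)
  have hcont : ∀ ω, ContinuousOn (Ψ ω) (closedBall w R) := fun ω ↦
    closure_ball w hR.ne' ▸ (hΨ ω).continuousOn
  calc ∫⁻ ω, ⨆ z ∈ ball w r, ‖Ψ ω z‖ₑ ^ s ∂P
      ≤ ∫⁻ ω, κ * (∫⁻ y in ball w R, ‖Ψ ω y‖ₑ ^ s) ∂P :=
        lintegral_mono fun ω ↦ iSup_enorm_rpow_le_lintegral_ball hs hrR (hΨ ω)
    _ = κ * ∫⁻ y in ball w R, ∫⁻ ω, ‖Ψ ω y‖ₑ ^ s ∂P := by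
        rw [lintegral_const_mul' _ _ ofReal_ne_top,
          lintegral_setLIntegral_ball_comm hR hcont hmeas (g := fun x ↦ ‖x‖ₑ ^ s) (by fun_prop)]
    _ ≤ κ * ∫⁻ _ in ball w R, ⨆ z ∈ ball w R, ∫⁻ ω, ‖Ψ ω z‖ₑ ^ s ∂P := by
        gcongr κ * ?_
        exact setLIntegral_mono' measurableSet_ball fun y hy ↦
          le_biSup (fun z ↦ ∫⁻ ω, ‖Ψ ω z‖ₑ ^ s ∂P) hy
    _ = κ * volume (ball w R) * ⨆ z ∈ ball w R, ∫⁻ ω, ‖Ψ ω z‖ₑ ^ s ∂P := by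
        rw [setLIntegral_const, mul_comm _ (volume _), mul_assoc]

/-- Lemma 7.1: for every `s > 0` there is a constant `C > 0`, depending
only on `s`, such that for every random analytic function `Ψ` on a disc `B(w, r)`,
`E[sup_{z ∈ B(w, r/2)} |Ψ z|^s] ≤ C · sup_{z ∈ B(w, r)} E|Ψ z|^s`. -/
theorem stmt5 (s : ℝ) (hs : 0 < s) :
    ∃ C : ℝ≥0∞, 0 < C ∧ C < ⊤ ∧
      ∀ (Ω : Type) (_ : MeasurableSpace Ω) (P : Measure Ω), IsProbabilityMeasure P →
        ∀ (w : ℂ) (r : ℝ), 0 < r →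
          ∀ Ψ : Ω → ℂ → ℂ,
            (∀ ω, DifferentiableOn ℂ (Ψ ω) (ball w r)) →
            (∀ z ∈ ball w r, Measurable fun ω => Ψ ω z) →
            ∫⁻ ω, ⨆ z ∈ ball w (r / 2), (‖Ψ ω z‖₊ : ℝ≥0∞) ^ s ∂P ≤
              C * ⨆ z ∈ ball w r, ∫⁻ ω, (‖Ψ ω z‖₊ : ℝ≥0∞) ^ s ∂P := by
  refine ⟨ENNReal.ofReal (9 * 4 ^ (⌈s⌉₊ / s)), ENNReal.ofReal_pos.2 (by positivity),
    ofReal_lt_top, fun Ω _ P _ w r hr Ψ hdiff hmeas ↦ ?_⟩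
  simp only [← enorm_eq_nnnorm]
  have hR : closedBall w (3 * r / 4) ⊆ ball w r := closedBall_subset_ball (by linarith)
  have hC : ENNReal.ofReal (4 ^ (⌈s⌉₊ / s) / π / (3 * r / 4 - r / 2) ^ 2) *
      volume (ball w (3 * r / 4)) = ENNReal.ofReal (9 * 4 ^ (⌈s⌉₊ / s)) := by
    rw [Complex.volume_ball, ← ENNReal.ofReal_coe_nnreal, NNReal.coe_real_pi,
      ← ENNReal.ofReal_pow (by positivity), ← ENNReal.ofReal_mul (by positivity),
      ← ENNReal.ofReal_mul (by positivity)]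
    congr 1
    field_simp
    ring
  calc ∫⁻ ω, ⨆ z ∈ ball w (r / 2), ‖Ψ ω z‖ₑ ^ s ∂P
      ≤ ENNReal.ofReal (4 ^ (⌈s⌉₊ / s) / π / (3 * r / 4 - r / 2) ^ 2) *
          volume (ball w (3 * r / 4)) * ⨆ z ∈ ball w (3 * r / 4), ∫⁻ ω, ‖Ψ ω z‖ₑ ^ s ∂P :=
        lintegral_iSup_enorm_rpow_le hs (by positivity) (by linarith)
          (fun ω ↦ (hdiff ω).diffContOnCl_ball hR) fun z hz ↦ hmeas z (hR hz)
    _ ≤ ENNReal.ofReal (9 * 4 ^ (⌈s⌉₊ / s)) * ⨆ z ∈ ball w r, ∫⁻ ω, ‖Ψ ω z‖ₑ ^ s ∂P := by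
        rw [hC]
        gcongr _ * ?_
        exact biSup_mono fun z hz ↦ hR (ball_subset_closedBall hz)
end

section
/- Let m ≥ 2, t ≥ 0, and F(θ) := (t!/(m·(mt+m-1)!)) ∏_{i=t}^{mt+m-2} (θ + i). Then for λ₁ : (0,∞) → (-t,∞) the inverse of F, the function β ↦ β·λ₁'(β) satisfies β·λ₁'(β) = (∑_{i=t}^{mt+m-2} 1/(λ₁(β)+i))^{-1}, is strictly increasing in β, and increases from 0 to ∞ as β ranges over (0, ∞). Consequently, for every α > 0 the equation β·λ₁'(β) = α has a unique solution β(α) > 0, and β(α) is strictly increasing in α. -/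
/-!
`F` is a positive multiple of `∏ (θ + i)`, so its logarithmic derivative is
`S(θ) = ∑ 1 / (θ + i)`, and the inverse function rule gives `β · λ₁'(β) = F(λ₁ β) / F'(λ₁ β)
= 1 / S(λ₁ β)`. Since `S` is positive and strictly decreasing on `(-t, ∞)`, blowing up at `-t` and
vanishing at `∞`, while `λ₁` is an increasing bijection `(0, ∞) → (-t, ∞)`, the composite
`1 / S ∘ λ₁` is a continuous increasing bijection `(0, ∞) → (0, ∞)`.
-/

open Filter Topology Set

lemma hasDerivAt_prod_add {ι : Type*} (s : Finset ι) (a : ι → ℝ) {x : ℝ}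
    (hx : ∀ i ∈ s, x + a i ≠ 0) :
    HasDerivAt (fun θ => ∏ i ∈ s, (θ + a i))
      ((∏ i ∈ s, (x + a i)) * ∑ i ∈ s, (x + a i)⁻¹) x := by
  classical
  refine (HasDerivAt.fun_finsetProd (u := s) fun i _ =>
    (hasDerivAt_id x).add_const (a i)).congr_deriv ?_
  rw [Finset.mul_sum]
  refine Finset.sum_congr rfl fun i hi => ?_
  rw [smul_eq_mul, mul_one, ← Finset.mul_prod_erase _ _ hi, mul_comm (x + a i), id,
    mul_inv_cancel_right₀ (hx i hi)]

section StrictMonoOnIoi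

variable {f : ℝ → ℝ} {a c : ℝ}

lemma strictMonoOn_of_rightInvOn {F : ℝ → ℝ} (hF : StrictMonoOn F (Ioi c))
    (hmaps : MapsTo f (Ioi a) (Ioi c)) (hinv : RightInvOn f F (Ioi a)) :
    StrictMonoOn f (Ioi a) := by
  intro x hx y hy hxy
  by_contra! h
  have := hF.monotoneOn (hmaps hy) (hmaps hx) h
  rw [hinv hx, hinv hy] at this
  linarith

lemma continuousAt_of_strictMonoOn_of_surjOn (hf : StrictMonoOn f (Ioi a))
    (hmaps : MapsTo f (Ioi a) (Ioi c)) (hsurj : SurjOn f (Ioi a) (Ioi c)) {x : ℝ} (hx : a < x) :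
    ContinuousAt f x :=
  hf.continuousAt_of_image_mem_nhds (Ioi_mem_nhds hx)
    (mem_of_superset (Ioi_mem_nhds (hmaps hx)) hsurj)

lemma tendsto_nhdsGT_of_strictMonoOn_of_surjOn (hf : StrictMonoOn f (Ioi a))
    (hmaps : MapsTo f (Ioi a) (Ioi c)) (hsurj : SurjOn f (Ioi a) (Ioi c)) :
    Tendsto f (𝓝[>] a) (𝓝[>] c) := by
  refine tendsto_nhdsWithin_iff.2 ⟨tendsto_order.2 ⟨fun b hb => ?_, fun b hb => ?_⟩,
    eventually_nhdsWithin_of_forall hmaps⟩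
  · exact eventually_nhdsWithin_of_forall fun x hx => hb.trans (hmaps hx)
  · obtain ⟨x, hx, rfl⟩ := hsurj hb
    filter_upwards [Ioo_mem_nhdsGT hx] with y hy using hf hy.1 hx hy.2

lemma tendsto_atTop_of_strictMonoOn_of_surjOn (hf : StrictMonoOn f (Ioi a))
    (hsurj : SurjOn f (Ioi a) (Ioi c)) : Tendsto f atTop atTop := by
  refine tendsto_atTop_atTop.2 fun b => ?_
  obtain ⟨x, hx, hfx⟩ := hsurj (mem_Ioi.2 (by linarith [le_max_right b c]) : max b c + 1 ∈ Ioi c)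
  refine ⟨x, fun y hxy => ?_⟩
  have := hf.monotoneOn hx (lt_of_lt_of_le hx hxy) hxy
  linarith [le_max_left b c]

lemma existsUnique_eq_of_strictMonoOn_Ioi (hf : StrictMonoOn f (Ioi a))
    (hcont : ContinuousOn f (Ioi a)) {b : ℝ} (hbot : Tendsto f (𝓝[>] a) (𝓝 b))
    (htop : Tendsto f atTop atTop) {y : ℝ} (hy : b < y) : ∃! x, a < x ∧ f x = y := by
  obtain ⟨x₁, hx₁y, hx₁⟩ := ((hbot.eventually (eventually_lt_nhds hy)).and
    self_mem_nhdsWithin).exists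
  obtain ⟨x₂, hx₂y, hx₁₂⟩ := ((htop.eventually (eventually_gt_atTop y)).and
    (eventually_ge_atTop x₁)).exists
  obtain ⟨x, hx, rfl⟩ := intermediate_value_Icc hx₁₂
    (hcont.mono fun z hz => lt_of_lt_of_le hx₁ hz.1) ⟨hx₁y.le, hx₂y.le⟩
  have hax : a < x := lt_of_lt_of_le hx₁ hx.1
  exact ⟨x, ⟨hax, rfl⟩, fun z hz => hf.injOn hz.1 hax hz.2⟩

end StrictMonoOnIoi

lemma strictMonoOn_of_hasDerivAt_mul {F S : ℝ → ℝ} {c : ℝ}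
    (hF : ∀ l, c < l → HasDerivAt F (F l * S l) l) (hFpos : MapsTo F (Ioi c) (Ioi 0))
    (hS : ∀ l, c < l → 0 < S l) : StrictMonoOn F (Ioi c) :=
  strictMonoOn_of_deriv_pos (convex_Ioi c)
    (fun l hl => (hF l hl).continuousAt.continuousWithinAt) fun l hl => by
      rw [interior_Ioi] at hl
      rw [(hF l hl).deriv]
      exact mul_pos (hFpos hl) (hS l hl)

lemma eqOn_mul_deriv_of_hasDerivAt_mul {F S g : ℝ → ℝ} {c : ℝ}
    (hF : ∀ l, c < l → HasDerivAt F (F l * S l) l) (hS : ∀ l, c < l → S l ≠ 0)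
    (hg : StrictMonoOn g (Ioi 0)) (hmaps : MapsTo g (Ioi 0) (Ioi c))
    (hsurj : SurjOn g (Ioi 0) (Ioi c)) (hinv : RightInvOn g F (Ioi 0)) :
    EqOn (fun x => x * deriv g x) (fun x => (S (g x))⁻¹) (Ioi 0) := by
  intro x (hx : 0 < x)
  have hFx := hF _ (hmaps hx)
  rw [hinv hx] at hFx
  have hg' := hFx.of_local_left_inverse (continuousAt_of_strictMonoOn_of_surjOn hg hmaps hsurj hx)
    (mul_ne_zero hx.ne' (hS _ (hmaps hx))) (eventually_of_mem (Ioi_mem_nhds hx) hinv)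
  simp only [hg'.deriv, mul_inv, ← mul_assoc, mul_inv_cancel₀ hx.ne', one_mul]

section SumInvAddNatCast

variable {t n : ℕ}

lemma add_natCast_pos_of_mem_Icc {l : ℝ} (hl : -(t : ℝ) < l) {i : ℕ} (hi : i ∈ Finset.Icc t n) :
    0 < l + i := by
  have : (t : ℝ) ≤ i := by exact_mod_cast (Finset.mem_Icc.1 hi).1
  linarith

lemma sum_inv_add_natCast_pos (htn : t ≤ n) {l : ℝ} (hl : -(t : ℝ) < l) :
    0 < ∑ i ∈ Finset.Icc t n, (l + i)⁻¹ :=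
  Finset.sum_pos (fun _ hi => inv_pos.2 (add_natCast_pos_of_mem_Icc hl hi))
    ⟨t, Finset.mem_Icc.2 ⟨le_rfl, htn⟩⟩

lemma strictAntiOn_sum_inv_add_natCast (htn : t ≤ n) :
    StrictAntiOn (fun l : ℝ => ∑ i ∈ Finset.Icc t n, (l + i)⁻¹) (Ioi (-t)) := by
  intro l₁ hl₁ l₂ _ hl
  refine Finset.sum_lt_sum_of_nonempty ⟨t, Finset.mem_Icc.2 ⟨le_rfl, htn⟩⟩ fun i hi => ?_
  exact inv_strictAnti₀ (add_natCast_pos_of_mem_Icc hl₁ hi) (by linarith)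

lemma continuousOn_sum_inv_add_natCast :
    ContinuousOn (fun l : ℝ => ∑ i ∈ Finset.Icc t n, (l + i)⁻¹) (Ioi (-t)) :=
  continuousOn_finsetSum _ fun _ hi => (continuousOn_id.add continuousOn_const).inv₀
    fun _ hl => (add_natCast_pos_of_mem_Icc hl hi).ne'

lemma tendsto_sum_inv_add_natCast_nhdsGT (htn : t ≤ n) :
    Tendsto (fun l : ℝ => ∑ i ∈ Finset.Icc t n, (l + i)⁻¹) (𝓝[>] (-t)) atTop := by
  have hshift : Tendsto (fun l : ℝ => l + t) (𝓝[>] (-t)) (𝓝[>] 0) :=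
    tendsto_nhdsWithin_iff.2
      ⟨((continuous_add_const (t : ℝ)).tendsto' _ _ (by simp)).mono_left nhdsWithin_le_nhds,
        eventually_nhdsWithin_of_forall fun l (hl : -(t : ℝ) < l) => by simp; linarith⟩
  refine tendsto_atTop_mono' _ ?_ (tendsto_inv_nhdsGT_zero.comp hshift)
  filter_upwards [self_mem_nhdsWithin] with l (hl : -(t : ℝ) < l)
  exact Finset.single_le_sum (f := fun i : ℕ => (l + i)⁻¹)
    (fun i hi => (inv_pos.2 (add_natCast_pos_of_mem_Icc hl hi)).le)
    (Finset.mem_Icc.2 ⟨le_rfl, htn⟩)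

lemma tendsto_sum_inv_add_natCast_atTop (htn : t ≤ n) :
    Tendsto (fun l : ℝ => ∑ i ∈ Finset.Icc t n, (l + i)⁻¹) atTop (𝓝[>] 0) := by
  refine tendsto_nhdsWithin_iff.2 ⟨?_, ?_⟩
  · simpa using tendsto_finsetSum (Finset.Icc t n) fun i _ =>
      tendsto_inv_atTop_zero.comp (tendsto_atTop_add_const_right atTop (i : ℝ) tendsto_id)
  · filter_upwards [eventually_gt_atTop (-(t : ℝ))] with l hl
    exact sum_inv_add_natCast_pos htn hl

lemma strictMonoOn_inv_sum_inv_add_natCast (htn : t ≤ n) :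
    StrictMonoOn (fun l : ℝ => (∑ i ∈ Finset.Icc t n, (l + i)⁻¹)⁻¹) (Ioi (-t)) :=
  fun _ _ _ hl₂ hl => inv_strictAnti₀ (sum_inv_add_natCast_pos htn hl₂)
    (strictAntiOn_sum_inv_add_natCast htn ‹_› hl₂ hl)

variable {C : ℝ} {F : ℝ → ℝ}

lemma mapsTo_of_eq_const_mul_prod (hC : 0 < C)
    (hF : ∀ θ : ℝ, F θ = C * ∏ i ∈ Finset.Icc t n, (θ + i)) :
    MapsTo F (Ioi (-t)) (Ioi 0) := fun l hl => by
  rw [mem_Ioi, hF]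
  exact mul_pos hC (Finset.prod_pos fun _ hi => add_natCast_pos_of_mem_Icc hl hi)

lemma hasDerivAt_of_eq_const_mul_prod (hF : ∀ θ : ℝ, F θ = C * ∏ i ∈ Finset.Icc t n, (θ + i))
    {l : ℝ} (hl : -(t : ℝ) < l) :
    HasDerivAt F (F l * ∑ i ∈ Finset.Icc t n, (l + i)⁻¹) l := by
  have := (hasDerivAt_prod_add (Finset.Icc t n) (fun i : ℕ => (i : ℝ))
    fun _ hi => (add_natCast_pos_of_mem_Icc hl hi).ne').const_mul C
  rw [← mul_assoc, ← hF] at this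
  exact this.congr_of_eventuallyEq (.of_forall hF)

end SumInvAddNatCast

/-- with `F(θ) = (t!/(m·(mt+m-1)!)) ∏_{i=t}^{mt+m-2} (θ+i)` and `λ₁`
its inverse on `(0,∞)`, the function `β ↦ β·λ₁'(β)` equals
`(∑_{i=t}^{mt+m-2} 1/(λ₁(β)+i))⁻¹`, is strictly increasing, and increases from
`0` to `∞`; hence for each `α > 0` the equation `β·λ₁'(β) = α` has a unique
solution `β(α) > 0`, which is strictly increasing in `α`. -/
theorem stmt9 (m t : ℕ) (hm : 2 ≤ m)
    (F : ℝ → ℝ)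
    (hF : ∀ θ : ℝ, F θ =
      (Nat.factorial t : ℝ) / (m * Nat.factorial (m * t + m - 1)) *
        ∏ i ∈ Finset.Icc t (m * t + m - 2), (θ + i))
    (lam : ℝ → ℝ)
    (hlam : ∀ β : ℝ, 0 < β → -(t : ℝ) < lam β ∧ F (lam β) = β)
    (hlam' : ∀ l : ℝ, -(t : ℝ) < l → lam (F l) = l) :
    (∀ β : ℝ, 0 < β →
        β * deriv lam β = (∑ i ∈ Finset.Icc t (m * t + m - 2), 1 / (lam β + i))⁻¹) ∧
      StrictMonoOn (fun β => β * deriv lam β) (Set.Ioi 0) ∧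
      Tendsto (fun β => β * deriv lam β) (𝓝[>] (0 : ℝ)) (𝓝 0) ∧
      Tendsto (fun β => β * deriv lam β) atTop atTop ∧
      (∀ α : ℝ, 0 < α → ∃! β : ℝ, 0 < β ∧ β * deriv lam β = α) ∧
      (∀ α₁ α₂ β₁ β₂ : ℝ, 0 < α₁ → α₁ < α₂ →
        0 < β₁ → β₁ * deriv lam β₁ = α₁ →
        0 < β₂ → β₂ * deriv lam β₂ = α₂ → β₁ < β₂) := by
  have htn : t ≤ m * t + m - 2 := by
    have : 2 * t + 2 ≤ m * t + m := by nlinarith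
    omega
  have hC : 0 < (Nat.factorial t : ℝ) / (m * Nat.factorial (m * t + m - 1)) :=
    div_pos (by positivity) (mul_pos (by exact_mod_cast (by omega : 0 < m)) (by positivity))
  have hFpos := mapsTo_of_eq_const_mul_prod hC hF
  have hFderiv (l : ℝ) (hl : -(t : ℝ) < l) := hasDerivAt_of_eq_const_mul_prod hF hl
  have hSpos (l : ℝ) (hl : -(t : ℝ) < l) := sum_inv_add_natCast_pos htn hl
  have hmaps : MapsTo lam (Ioi 0) (Ioi (-t)) := fun β hβ => (hlam β hβ).1
  have hinv : RightInvOn lam F (Ioi 0) := fun β hβ => (hlam β hβ).2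
  have hsurj : SurjOn lam (Ioi 0) (Ioi (-t)) := LeftInvOn.surjOn hlam' hFpos
  have hmono := strictMonoOn_of_rightInvOn (strictMonoOn_of_hasDerivAt_mul hFderiv hFpos hSpos)
    hmaps hinv
  have hkey := eqOn_mul_deriv_of_hasDerivAt_mul hFderiv (fun l hl => (hSpos l hl).ne') hmono hmaps
    hsurj hinv
  have hGmono : StrictMonoOn (fun β => β * deriv lam β) (Ioi 0) :=
    ((strictMonoOn_inv_sum_inv_add_natCast htn).comp hmono hmaps).congr hkey.symm
  have hGcont : ContinuousOn (fun β => β * deriv lam β) (Ioi 0) :=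
    ((continuousOn_sum_inv_add_natCast.inv₀ fun l hl => (hSpos l hl).ne').comp
      (fun β hβ => (continuousAt_of_strictMonoOn_of_surjOn hmono hmaps hsurj hβ).continuousWithinAt)
      hmaps).congr hkey
  have hGbot : Tendsto (fun β => β * deriv lam β) (𝓝[>] 0) (𝓝 0) :=
    ((tendsto_sum_inv_add_natCast_nhdsGT htn).inv_tendsto_atTop.comp
      (tendsto_nhdsGT_of_strictMonoOn_of_surjOn hmono hmaps hsurj)).congr'
      (eventuallyEq_nhdsWithin_of_eqOn hkey).symm
  have hGtop : Tendsto (fun β => β * deriv lam β) atTop atTop :=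
    (tendsto_inv_nhdsGT_zero.comp ((tendsto_sum_inv_add_natCast_atTop htn).comp
      (tendsto_atTop_of_strictMonoOn_of_surjOn hmono hsurj))).congr'
      ((eventually_gt_atTop 0).mono fun β hβ => (hkey hβ).symm)
  exact ⟨fun β hβ => by simpa only [one_div] using hkey hβ, hGmono, hGbot, hGtop,
    fun α hα => existsUnique_eq_of_strictMonoOn_Ioi hGmono hGcont hGbot hGtop hα,
    fun _ _ _ _ _ hα hβ₁ hα₁ hβ₂ hα₂ => (hGmono.lt_iff_lt hβ₁ hβ₂).1 (hα₁ ▸ hα₂ ▸ hα)⟩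
end

section
/- Let m ≥ 2, t ≥ 0 and F(θ) := (t!/(m·(mt+m-1)!)) ∏_{i=t}^{mt+m-2}(θ+i). Define q(λ) := F(2λ-1)/F(λ)² for λ > (1-t)/2. Then the derivative of log q(λ) = log F(2λ-1) - 2 log F(λ) equals ∑_{i=t}^{mt+m-2} (2/(2λ-1+i) - 2/(λ+i)), which is strictly positive for (1-t)/2 < λ < 1 and strictly negative for λ > 1; hence q is strictly increasing on ((1-t)/2, 1] and strictly decreasing on [1, ∞). -/
open Real

/-!
Up to the positive constant, `F` is a product of linear factors `θ + i`, so `log q` is a sum of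
terms `log (2λ - 1 + i) - 2 log (λ + i)`. Each contributes `2/(2λ-1+i) - 2/(λ+i)` to the
derivative, whose sign is that of `(λ + i) - (2λ - 1 + i) = 1 - λ` as long as both factors are
positive. Hence `log q`, and with it `q`, increases up to `λ = 1` and decreases afterwards.
-/

noncomputable def shiftedProd {ι : Type*} (c : ℝ) (s : Finset ι) (a : ι → ℝ) (θ : ℝ) : ℝ :=
  c * ∏ i ∈ s, (θ + a i)

section ShiftedProd

variable {ι : Type*} {s : Finset ι} {a : ι → ℝ} {c x : ℝ}

lemma shiftedProd_pos (hc : 0 < c) (hx : ∀ i ∈ s, 0 < x + a i) : 0 < shiftedProd c s a x :=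
  mul_pos hc (Finset.prod_pos hx)

lemma log_shiftedProd (hc : c ≠ 0) (hx : ∀ i ∈ s, x + a i ≠ 0) :
    log (shiftedProd c s a x) = log c + ∑ i ∈ s, log (x + a i) := by
  rw [shiftedProd, Real.log_mul hc (Finset.prod_ne_zero_iff.2 hx), Real.log_prod hx]

lemma hasDerivAt_log_shiftedProd (hc : c ≠ 0) (hx : ∀ i ∈ s, x + a i ≠ 0) :
    HasDerivAt (fun y => log (shiftedProd c s a y)) (∑ i ∈ s, (x + a i)⁻¹) x := by
  have hsum : HasDerivAt (fun y => log c + ∑ i ∈ s, log (y + a i)) (∑ i ∈ s, (x + a i)⁻¹) x := by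
    refine (HasDerivAt.fun_sum fun i hi => ?_).const_add _
    simpa using ((hasDerivAt_id x).add_const (a i)).log (hx i hi)
  have hnear : ∀ᶠ y in nhds x, ∀ i ∈ s, y + a i ≠ 0 :=
    (Filter.eventually_all_finset s).2 fun i hi =>
      (continuous_id.add continuous_const).continuousAt.eventually_ne (hx i hi)
  exact hsum.congr_of_eventuallyEq (hnear.mono fun y hy => log_shiftedProd hc hy)

lemma hasDerivAt_log_shiftedProd_quotient (hc : c ≠ 0) (h₁ : ∀ i ∈ s, 2 * x - 1 + a i ≠ 0)
    (h₂ : ∀ i ∈ s, x + a i ≠ 0) :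
    HasDerivAt (fun y => log (shiftedProd c s a (2 * y - 1)) - 2 * log (shiftedProd c s a y))
      (∑ i ∈ s, (2 / (2 * x - 1 + a i) - 2 / (x + a i))) x := by
  have hlin : HasDerivAt (fun y : ℝ => 2 * y - 1) 2 x := by
    simpa using ((hasDerivAt_id x).const_mul 2).sub_const 1
  refine (((hasDerivAt_log_shiftedProd hc h₁).comp x hlin).sub
    ((hasDerivAt_log_shiftedProd hc h₂).const_mul 2)).congr_deriv ?_
  simp only [Finset.sum_sub_distrib, Finset.mul_sum, div_eq_mul_inv, mul_comm]

end ShiftedProd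

section Sign

variable {ι : Type*} {s : Finset ι} {a : ι → ℝ} {l : ℝ}

lemma sum_two_div_sub_two_div_pos (hs : s.Nonempty) (ha : ∀ i ∈ s, 0 < 2 * l - 1 + a i)
    (hl : l < 1) : 0 < ∑ i ∈ s, (2 / (2 * l - 1 + a i) - 2 / (l + a i)) :=
  Finset.sum_pos (fun i hi => sub_pos.2 <|
    div_lt_div_of_pos_left two_pos (ha i hi) (by linarith)) hs

lemma sum_two_div_sub_two_div_neg (hs : s.Nonempty) (ha : ∀ i ∈ s, 0 < l + a i) (hl : 1 < l) :
    ∑ i ∈ s, (2 / (2 * l - 1 + a i) - 2 / (l + a i)) < 0 :=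
  Finset.sum_neg (fun i hi => sub_neg.2 <|
    div_lt_div_of_pos_left two_pos (ha i hi) (by linarith)) hs

end Sign

section Monotone

variable {f f' g : ℝ → ℝ} {D : Set ℝ}

lemma strictMonoOn_of_hasDerivAt_pos (hD : Convex ℝ D) (hf : ∀ x ∈ D, HasDerivAt f (f' x) x)
    (hf' : ∀ x ∈ interior D, 0 < f' x) : StrictMonoOn f D :=
  strictMonoOn_of_deriv_pos hD (fun x hx => (hf x hx).continuousAt.continuousWithinAt)
    fun x hx => (hf x (interior_subset hx)).deriv ▸ hf' x hx

lemma strictAntiOn_of_hasDerivAt_neg (hD : Convex ℝ D) (hf : ∀ x ∈ D, HasDerivAt f (f' x) x)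
    (hf' : ∀ x ∈ interior D, f' x < 0) : StrictAntiOn f D :=
  strictAntiOn_of_deriv_neg hD (fun x hx => (hf x hx).continuousAt.continuousWithinAt)
    fun x hx => (hf x (interior_subset hx)).deriv ▸ hf' x hx

lemma strictMonoOn_of_log_eq (hg : ∀ x ∈ D, 0 < g x) (hlog : ∀ x ∈ D, log (g x) = f x)
    (hf : StrictMonoOn f D) : StrictMonoOn g D := fun x hx y hy hxy => by
  rw [← Real.log_lt_log_iff (hg x hx) (hg y hy), hlog x hx, hlog y hy]
  exact hf hx hy hxy

lemma strictAntiOn_of_log_eq (hg : ∀ x ∈ D, 0 < g x) (hlog : ∀ x ∈ D, log (g x) = f x)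
    (hf : StrictAntiOn f D) : StrictAntiOn g D := fun x hx y hy hxy => by
  rw [← Real.log_lt_log_iff (hg y hy) (hg x hx), hlog x hx, hlog y hy]
  exact hf hx hy hxy

end Monotone

/-- with `F(θ) = (t!/(m·(mt+m-1)!)) ∏_{i=t}^{mt+m-2} (θ+i)` and
`q(λ) = F(2λ-1)/F(λ)²` for `λ > (1-t)/2`, the derivative of
`log q(λ) = log F(2λ-1) - 2 log F(λ)` equals
`∑_{i=t}^{mt+m-2} (2/(2λ-1+i) - 2/(λ+i))`, which is positive for
`(1-t)/2 < λ < 1` and negative for `λ > 1`; hence `q` is strictly increasing on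
`((1-t)/2, 1]` and strictly decreasing on `[1, ∞)`. -/
theorem stmt10 (m t : ℕ) (hm : 2 ≤ m)
    (F : ℝ → ℝ)
    (hF : ∀ θ : ℝ, F θ =
      (Nat.factorial t : ℝ) / (m * Nat.factorial (m * t + m - 1)) *
        ∏ i ∈ Finset.Icc t (m * t + m - 2), (θ + i))
    (q : ℝ → ℝ) (hq : ∀ l : ℝ, q l = F (2 * l - 1) / (F l) ^ 2) :
    (∀ l : ℝ, (1 - (t : ℝ)) / 2 < l →
        deriv (fun x => Real.log (F (2 * x - 1)) - 2 * Real.log (F x)) l =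
          ∑ i ∈ Finset.Icc t (m * t + m - 2), (2 / (2 * l - 1 + i) - 2 / (l + i))) ∧
      (∀ l : ℝ, (1 - (t : ℝ)) / 2 < l → l < 1 →
        0 < ∑ i ∈ Finset.Icc t (m * t + m - 2), (2 / (2 * l - 1 + i) - 2 / (l + i))) ∧
      (∀ l : ℝ, 1 < l →
        ∑ i ∈ Finset.Icc t (m * t + m - 2), (2 / (2 * l - 1 + i) - 2 / (l + i)) < 0) ∧
      StrictMonoOn q (Set.Ioc ((1 - (t : ℝ)) / 2) 1) ∧
      StrictAntiOn q (Set.Ici 1) := by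
  set S := Finset.Icc t (m * t + m - 2)
  set l₀ : ℝ := (1 - (t : ℝ)) / 2 with hl₀
  set c : ℝ := (Nat.factorial t : ℝ) / (m * Nat.factorial (m * t + m - 1))
  have hc : 0 < c := by positivity
  obtain rfl : F = shiftedProd c S (fun i => (i : ℝ)) := funext hF
  have hS : S.Nonempty :=
    ⟨t, Finset.mem_Icc.2 ⟨le_rfl, by have := Nat.mul_le_mul_right t hm; omega⟩⟩
  have hcast : ∀ i ∈ S, (t : ℝ) ≤ i := fun i hi => by exact_mod_cast (Finset.mem_Icc.1 hi).1
  have hpos₁ : ∀ l : ℝ, l₀ < l → ∀ i ∈ S, 0 < 2 * l - 1 + i := fun l hl i hi => by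
    linarith [hcast i hi]
  have hpos₂ : ∀ l : ℝ, l₀ < l → ∀ i ∈ S, 0 < l + i := fun l hl i hi => by
    linarith [hcast i hi, Nat.cast_nonneg (α := ℝ) t]
  have hderiv : ∀ l ∈ Set.Ioi l₀, HasDerivAt _ _ l := fun l hl =>
    hasDerivAt_log_shiftedProd_quotient hc.ne' (fun i hi => (hpos₁ l hl i hi).ne')
      (fun i hi => (hpos₂ l hl i hi).ne')
  have hone : l₀ < 1 := by linarith [Nat.cast_nonneg (α := ℝ) t]
  have hpos : ∀ l : ℝ, l₀ < l → 0 < q l := fun l hl => by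
    rw [hq]
    exact div_pos (shiftedProd_pos hc (hpos₁ l hl)) (pow_pos (shiftedProd_pos hc (hpos₂ l hl)) 2)
  have hlog : ∀ l : ℝ, l₀ < l → log (q l) =
      log (shiftedProd c S (fun i => (i : ℝ)) (2 * l - 1)) -
        2 * log (shiftedProd c S (fun i => (i : ℝ)) l) := fun l hl => by
    rw [hq, Real.log_div (shiftedProd_pos hc (hpos₁ l hl)).ne'
      (pow_pos (shiftedProd_pos hc (hpos₂ l hl)) 2).ne', Real.log_pow, Nat.cast_ofNat]
  have hinc := fun l hl hl₁ => sum_two_div_sub_two_div_pos hS (hpos₁ l hl) hl₁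
  have hdec := fun l hl => sum_two_div_sub_two_div_neg hS (hpos₂ l (hone.trans hl)) hl
  refine ⟨fun l hl => (hderiv l hl).deriv, hinc, hdec, ?_, ?_⟩
  · refine strictMonoOn_of_log_eq (fun l hl => hpos l hl.1) (fun l hl => hlog l hl.1) ?_
    refine strictMonoOn_of_hasDerivAt_pos (convex_Ioc _ _) (fun l hl => hderiv l hl.1) ?_
    rw [interior_Ioc]
    exact fun l hl => hinc l hl.1 hl.2
  · have hge : ∀ l ∈ Set.Ici (1 : ℝ), l₀ < l := fun l hl => hone.trans_le hl
    refine strictAntiOn_of_log_eq (fun l hl => hpos l (hge l hl)) (fun l hl => hlog l (hge l hl)) ?_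
    refine strictAntiOn_of_hasDerivAt_neg (convex_Ici _) (fun l hl => hderiv l (hge l hl)) ?_
    rw [interior_Ici]
    exact hdec
end

section
/- Let m ≥ 2, t ≥ 0, and let λ₁ : (0,∞) → (-t,∞) be the inverse of F(θ) := (t!/(m·(mt+m-1)!)) ∏_{i=t}^{mt+m-2}(θ+i). Then the set I := {β > 0 : 1 < λ₁(β²) < 2λ₁(β) - 1} is an open interval containing 1 and contained in (1/m, ∞). -/
/-!
Put `l = λ₁(β)`, so `β = F(l)`. By monotonicity of `F`, `1 < λ₁(β²)` means `β² > F(1) = 1/m`, and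
`λ₁(β²) < 2λ₁(β) - 1` means `F(l)² < F(2l - 1)`. Up to the constant of `F`, the quotient
`F(2l - 1) / F(l)²` is a product of factors `(2l - 1 + i) / (l + i)²`, each antitone on `[1, ∞)`,
and it drops below `1` for large `l`. Hence `I` is order-connected and bounded. As a monotone map
onto the interval `(-t, ∞)`, `λ₁` is continuous, so `I` is open, hence an open interval. It contains
`1` because `λ₁(1) = 2`, and `β² > 1/m` forces `β > 1/m`.
-/

open Set Nat

theorem Nat.factorial_mul_prod_Icc_add (a t n : ℕ) (h : t ≤ n + 1) :
    (t + a)! * ∏ i ∈ Finset.Icc t n, (a + 1 + i) = (n + a + 1)! := by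
  rw [← Finset.Ico_add_one_right_eq_Icc, Finset.prod_Ico_eq_prod_range,
    show n + a + 1 = t + a + (n + 1 - t) by omega,
    ← Nat.factorial_mul_ascFactorial (t + a) (n + 1 - t), Nat.ascFactorial_eq_prod_range]
  congr 1
  exact Finset.prod_congr rfl fun k _ => by ring

theorem normalized_prod_one_add {m t : ℕ} (hm : 2 ≤ m) :
    (t ! : ℝ) / (m * (m * t + m - 1)!) * ∏ i ∈ Finset.Icc t (m * t + m - 2), ((1 : ℝ) + i)
      = 1 / m := by
  have hmt : t ≤ m * t := Nat.le_mul_of_pos_left t (by omega)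
  have h := Nat.factorial_mul_prod_Icc_add 0 t (m * t + m - 2) (by omega)
  rw [show m * t + m - 2 + 0 + 1 = m * t + m - 1 by omega, add_zero] at h
  have h' : (t ! : ℝ) * ∏ i ∈ Finset.Icc t (m * t + m - 2), ((1 : ℝ) + i)
      = (m * t + m - 1)! := by
    exact_mod_cast h
  have : (0 : ℝ) < m := by positivity
  field_simp
  exact h'

theorem normalized_prod_two_add {m t : ℕ} (hm : 2 ≤ m) :
    (t ! : ℝ) / (m * (m * t + m - 1)!) * ∏ i ∈ Finset.Icc t (m * t + m - 2), ((2 : ℝ) + i)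
      = 1 := by
  have hmt : t ≤ m * t := Nat.le_mul_of_pos_left t (by omega)
  have h := Nat.factorial_mul_prod_Icc_add 1 t (m * t + m - 2) (by omega)
  rw [show m * t + m - 2 + 1 + 1 = (m * t + m - 1) + 1 by omega, Nat.factorial_succ,
    Nat.factorial_succ, show m * t + m - 1 + 1 = m * (t + 1) by rw [Nat.mul_add_one]; omega] at h
  have h' : ((t + 1 : ℝ) * t !) * ∏ i ∈ Finset.Icc t (m * t + m - 2), ((2 : ℝ) + i)
      = m * (t + 1) * (m * t + m - 1)! := by
    exact_mod_cast h
  have : (0 : ℝ) < m := by positivity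
  field_simp
  exact mul_left_cancel₀ (by positivity : (t + 1 : ℝ) ≠ 0) (by linear_combination h')

section RisingProduct

variable {F : ℝ → ℝ} {c : ℝ} {s : Finset ℕ} {t : ℕ}

theorem add_natCast_pos {i : ℕ} (hi : t ≤ i) {x : ℝ} (hx : -(t : ℝ) < x) : 0 < x + i := by
  have : (t : ℝ) ≤ i := by exact_mod_cast hi
  linarith

theorem prod_add_natCast_pos (hs : ∀ i ∈ s, t ≤ i) {x : ℝ} (hx : -(t : ℝ) < x) :
    0 < ∏ i ∈ s, (x + i) :=
  Finset.prod_pos fun i hi => add_natCast_pos (hs i hi) hx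

theorem strictMonoOn_of_eq_mul_prod (hF : ∀ θ, F θ = c * ∏ i ∈ s, (θ + i)) (hc : 0 < c)
    (hs : ∀ i ∈ s, t ≤ i) (hne : s.Nonempty) : StrictMonoOn F (Ioi (-t)) := by
  intro x hx y _ hxy
  rw [hF, hF]
  refine mul_lt_mul_of_pos_left ?_ hc
  exact Finset.prod_lt_prod_of_nonempty (fun i hi => add_natCast_pos (hs i hi) hx)
    (fun i _ => by linarith) hne

/-- That is, `l ↦ (2 l - 1 + i) / (l + i) ^ 2` is antitone on `[1, ∞)`: with `u = x + i`,
`v = y + i`, `k = 1 + i`, the difference of the two sides is `(v - u) (u (v - k) + v (u - k))`. -/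
theorem two_mul_sub_one_add_mul_sq_le {i x y : ℝ} (hi : 0 ≤ i) (hx : 1 ≤ x) (hxy : x ≤ y) :
    (2 * y - 1 + i) * (x + i) ^ 2 ≤ (2 * x - 1 + i) * (y + i) ^ 2 := by
  nlinarith [mul_nonneg (sub_nonneg.2 hxy)
    (add_nonneg (mul_nonneg (by linarith : 0 ≤ x + i) (by linarith : 0 ≤ y - 1))
      (mul_nonneg (by linarith : 0 ≤ y + i) (by linarith : 0 ≤ x - 1)))]

theorem sq_lt_apply_two_mul_sub_one_of_le (hF : ∀ θ, F θ = c * ∏ i ∈ s, (θ + i)) (hc : 0 < c)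
    {x y : ℝ} (hx : 1 ≤ x) (hxy : x ≤ y) (hy : F y ^ 2 < F (2 * y - 1)) :
    F x ^ 2 < F (2 * x - 1) := by
  have hfactors : (∏ i ∈ s, (2 * y - 1 + i)) * (∏ i ∈ s, (x + i)) ^ 2
      ≤ (∏ i ∈ s, (2 * x - 1 + i)) * (∏ i ∈ s, (y + i)) ^ 2 := by
    simp only [← Finset.prod_pow, ← Finset.prod_mul_distrib]
    refine Finset.prod_le_prod (fun i _ => ?_) fun i _ =>
      two_mul_sub_one_add_mul_sq_le (Nat.cast_nonneg i) hx hxy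
    have hi : (0 : ℝ) ≤ i := Nat.cast_nonneg i
    exact mul_nonneg (by linarith) (sq_nonneg _)
  rw [hF, hF, mul_pow, sq c, mul_assoc] at hy ⊢
  have hy' := lt_of_mul_lt_mul_left hy hc.le
  refine mul_lt_mul_of_pos_left ?_ hc
  refine lt_of_mul_lt_mul_right (a := (∏ i ∈ s, (y + i)) ^ 2) ?_ (by positivity)
  calc c * (∏ i ∈ s, (x + i)) ^ 2 * (∏ i ∈ s, (y + i)) ^ 2
      = (∏ i ∈ s, (x + i)) ^ 2 * (c * (∏ i ∈ s, (y + i)) ^ 2) := by ring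
    _ < (∏ i ∈ s, (x + i)) ^ 2 * ∏ i ∈ s, (2 * y - 1 + i) :=
        mul_lt_mul_of_pos_left hy' (by positivity)
    _ ≤ (∏ i ∈ s, (2 * x - 1 + i)) * (∏ i ∈ s, (y + i)) ^ 2 := by linarith

theorem exists_apply_two_mul_sub_one_le_sq (hF : ∀ θ, F θ = c * ∏ i ∈ s, (θ + i)) (hc : 0 < c)
    (hne : s.Nonempty) : ∃ B : ℝ, 1 ≤ B ∧ F (2 * B - 1) ≤ F B ^ 2 := by
  set B : ℝ := max 2 (2 / c)
  have hB2 : 2 ≤ B := le_max_left _ _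
  have hBc : 2 / B ≤ c := (div_le_iff₀ (by linarith)).2 (by
    rw [mul_comm, ← div_le_iff₀ hc]; exact le_max_right _ _)
  refine ⟨B, by linarith, ?_⟩
  have hfactor : ∀ i ∈ s, 2 * B - 1 + i ≤ 2 / B * (B + i) ^ 2 := by
    intro i _
    have hi : (0 : ℝ) ≤ i := Nat.cast_nonneg i
    rw [div_mul_eq_mul_div, le_div_iff₀ (by linarith)]
    nlinarith
  have hpow : (2 / B) ^ s.card ≤ c :=
    (pow_le_of_le_one (by positivity) ((div_le_one (by linarith)).2 hB2) hne.card_pos.ne').trans hBc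
  rw [hF, hF, mul_pow, sq c, mul_assoc]
  refine mul_le_mul_of_nonneg_left ?_ hc.le
  calc ∏ i ∈ s, (2 * B - 1 + i)
      ≤ ∏ i ∈ s, (2 / B * (B + i) ^ 2) :=
        Finset.prod_le_prod
          (fun i _ => by have : (0 : ℝ) ≤ i := Nat.cast_nonneg i; linarith) hfactor
    _ = (2 / B) ^ s.card * (∏ i ∈ s, (B + i)) ^ 2 := by
        rw [Finset.prod_mul_distrib, Finset.prod_const, Finset.prod_pow]
    _ ≤ c * (∏ i ∈ s, (B + i)) ^ 2 := by gcongr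

end RisingProduct

theorem IsOpen.eq_Ioo_csInf_csSup {α : Type*} [ConditionallyCompleteLinearOrder α]
    [TopologicalSpace α] [OrderTopology α] [DenselyOrdered α] [NoMinOrder α] [NoMaxOrder α]
    {s : Set α} (hs : IsOpen s) (hc : s.OrdConnected) (hne : s.Nonempty) (hb : BddBelow s)
    (ha : BddAbove s) :
    s = Ioo (sInf s) (sSup s) :=
  subset_antisymm ((hs.subset_interior_iff.2 (subset_Icc_csInf_csSup hb ha)).trans
      interior_Icc.subset)
    (IsConnected.Ioo_csInf_csSup_subset ⟨hne, hc.isPreconnected⟩ hb ha)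

def setI (lam : ℝ → ℝ) : Set ℝ := {β | 0 < β ∧ 1 < lam (β ^ 2) ∧ lam (β ^ 2) < 2 * lam β - 1}

section RightInverse

variable {F lam : ℝ → ℝ} {a : ℝ}

theorem StrictMonoOn.lt_apply_iff_rightInverse_lt (hF : StrictMonoOn F (Ioi a))
    (hlam : ∀ β, 0 < β → a < lam β ∧ F (lam β) = β) {β l : ℝ} (hβ : 0 < β) (hl : a < l) :
    β < F l ↔ lam β < l := by
  conv_lhs => rw [← (hlam β hβ).2]
  exact hF.lt_iff_lt (hlam β hβ).1 hl

theorem StrictMonoOn.strictMonoOn_rightInverse (hF : StrictMonoOn F (Ioi a))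
    (hlam : ∀ β, 0 < β → a < lam β ∧ F (lam β) = β) : StrictMonoOn lam (Ioi 0) :=
  fun x hx y hy hxy => (hF.lt_apply_iff_rightInverse_lt hlam hx (hlam y hy).1).1 <| by
    rwa [(hlam y hy).2]

theorem StrictMonoOn.continuousOn_rightInverse (hF : StrictMonoOn F (Ioi a))
    (hFpos : ∀ l, a < l → 0 < F l) (hlam : ∀ β, 0 < β → a < lam β ∧ F (lam β) = β)
    (hlam' : ∀ l, a < l → lam (F l) = l) : ContinuousOn lam (Ioi 0) := by
  refine continuousOn_of_forall_continuousAt fun β hβ => ?_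
  refine continuousAt_of_monotoneOn_of_image_mem_nhds
    (hF.strictMonoOn_rightInverse hlam).monotoneOn (Ioi_mem_nhds hβ) ?_
  exact Filter.mem_of_superset (Ioi_mem_nhds (hlam β hβ).1) fun l hl =>
    ⟨F l, hFpos l hl, hlam' l hl⟩

theorem isOpen_setI (h : ContinuousOn lam (Ioi 0)) : IsOpen (setI lam) := by
  have hsq : ContinuousOn (fun β => lam (β ^ 2)) (Ioi 0) :=
    h.comp (continuousOn_pow 2) fun β (hβ : 0 < β) => pow_pos hβ 2
  have hpair : ContinuousOn (fun β => (lam (β ^ 2), 2 * lam β - 1)) (Ioi 0) :=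
    hsq.prodMk (by fun_prop)
  have hopen : IsOpen {p : ℝ × ℝ | 1 < p.1 ∧ p.1 < p.2} :=
    (isOpen_lt continuous_const continuous_fst).inter (isOpen_lt continuous_fst continuous_snd)
  exact hpair.isOpen_inter_preimage isOpen_Ioi hopen

theorem one_lt_of_mem_setI {β : ℝ} (hβ : β ∈ setI lam) : 1 < lam β := by
  obtain ⟨-, h1, h2⟩ := hβ
  linarith

theorem sq_lt_apply_of_mem_setI (hF : StrictMonoOn F (Ioi a))
    (hlam : ∀ β, 0 < β → a < lam β ∧ F (lam β) = β) {β : ℝ} (hβ : β ∈ setI lam) :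
    F (lam β) ^ 2 < F (2 * lam β - 1) := by
  have hβ1 := one_lt_of_mem_setI hβ
  have ha := (hlam β hβ.1).1
  rw [(hlam β hβ.1).2, hF.lt_apply_iff_rightInverse_lt hlam (pow_pos hβ.1 2) (by linarith)]
  exact hβ.2.2

theorem ordConnected_setI (hF : StrictMonoOn F (Ioi a))
    (hlam : ∀ β, 0 < β → a < lam β ∧ F (lam β) = β)
    (hP : ∀ x y, 1 ≤ x → x ≤ y → F y ^ 2 < F (2 * y - 1) → F x ^ 2 < F (2 * x - 1)) :
    (setI lam).OrdConnected := by
  refine ⟨fun x hx y hy z ⟨hxz, hzy⟩ => ?_⟩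
  have hz0 : 0 < z := hx.1.trans_le hxz
  have hmono := (hF.strictMonoOn_rightInverse hlam).monotoneOn
  have hlz : 1 < lam z := (one_lt_of_mem_setI hx).trans_le (hmono hx.1 hz0 hxz)
  have hPz := hP _ _ hlz.le (hmono hz0 (hz0.trans_le hzy) hzy)
    (sq_lt_apply_of_mem_setI hF hlam hy)
  have ha := (hlam z hz0).1
  rw [(hlam z hz0).2, hF.lt_apply_iff_rightInverse_lt hlam (by positivity) (by linarith)] at hPz
  refine ⟨hz0, hx.2.1.trans_le ?_, hPz⟩
  exact hmono (pow_pos hx.1 2) (pow_pos hz0 2) (pow_le_pow_left₀ hx.1.le hxz 2)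

theorem bddAbove_setI (hF : StrictMonoOn F (Ioi a))
    (hlam : ∀ β, 0 < β → a < lam β ∧ F (lam β) = β)
    (hP : ∀ x y, 1 ≤ x → x ≤ y → F y ^ 2 < F (2 * y - 1) → F x ^ 2 < F (2 * x - 1))
    {B : ℝ} (hB : 1 ≤ B) (hFB : F (2 * B - 1) ≤ F B ^ 2) : BddAbove (setI lam) := by
  refine ⟨F B, fun β hβ => ?_⟩
  have hlB : lam β < B := lt_of_not_ge fun hBl =>
    hFB.not_gt (hP B (lam β) hB hBl (sq_lt_apply_of_mem_setI hF hlam hβ))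
  exact ((hF.lt_apply_iff_rightInverse_lt hlam hβ.1 ((hlam β hβ.1).1.trans hlB)).2 hlB).le

theorem apply_one_lt_sq_of_mem_setI (hF : StrictMonoOn F (Ioi a))
    (hlam : ∀ β, 0 < β → a < lam β ∧ F (lam β) = β) (ha : a < 1) {β : ℝ}
    (hβ : β ∈ setI lam) : F 1 < β ^ 2 := by
  obtain ⟨hβ0, h1, -⟩ := hβ
  have hβ2 := hlam (β ^ 2) (by positivity)
  rw [← hβ2.2]
  exact hF ha hβ2.1 h1

end RightInverse

/-- Lemma 8.5, first part: with `λ₁ : (0,∞) → (-t,∞)` the inverse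
of `F`, the set `I = {β > 0 : 1 < λ₁(β²) < 2λ₁(β) - 1}` is an open interval
containing `1` and contained in `(1/m, ∞)`. -/
theorem stmt12 (m t : ℕ) (hm : 2 ≤ m)
    (F : ℝ → ℝ)
    (hF : ∀ θ : ℝ, F θ =
      (Nat.factorial t : ℝ) / (m * Nat.factorial (m * t + m - 1)) *
        ∏ i ∈ Finset.Icc t (m * t + m - 2), (θ + i))
    (lam : ℝ → ℝ)
    (hlam : ∀ β : ℝ, 0 < β → -(t : ℝ) < lam β ∧ F (lam β) = β)
    (hlam' : ∀ l : ℝ, -(t : ℝ) < l → lam (F l) = l) :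
    ∃ a b : ℝ,
      {β : ℝ | 0 < β ∧ 1 < lam (β ^ 2) ∧ lam (β ^ 2) < 2 * lam β - 1} = Set.Ioo a b ∧
      (1 : ℝ) ∈ Set.Ioo a b ∧
      Set.Ioo a b ⊆ Set.Ioi (1 / (m : ℝ)) := by
  have hs : ∀ i ∈ Finset.Icc t (m * t + m - 2), t ≤ i := fun i hi => (Finset.mem_Icc.1 hi).1
  have hne : (Finset.Icc t (m * t + m - 2)).Nonempty :=
    Finset.nonempty_Icc.2 (by have := Nat.le_mul_of_pos_left t (by omega : 0 < m); omega)
  have hc : (0 : ℝ) < t ! / (m * (m * t + m - 1)!) := by positivity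
  have hFmono := strictMonoOn_of_eq_mul_prod hF hc hs hne
  have hFpos (l : ℝ) (hl : -(t : ℝ) < l) : 0 < F l := by
    rw [hF]; exact mul_pos hc (prod_add_natCast_pos hs hl)
  have ht1 : -(t : ℝ) < 1 := by linarith [(Nat.cast_nonneg t : (0 : ℝ) ≤ t)]
  have hlam1 : lam 1 = 2 := by
    rw [← (hF 2).trans (normalized_prod_two_add hm)]
    exact hlam' 2 (by linarith)
  have hP (x y : ℝ) := sq_lt_apply_two_mul_sub_one_of_le (x := x) (y := y) hF hc
  obtain ⟨B, hB, hFB⟩ := exists_apply_two_mul_sub_one_le_sq hF hc hne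
  have h1 : (1 : ℝ) ∈ setI lam := ⟨one_pos, by norm_num [hlam1], by norm_num [hlam1]⟩
  have hI := (isOpen_setI (hFmono.continuousOn_rightInverse hFpos hlam hlam')).eq_Ioo_csInf_csSup
    (ordConnected_setI hFmono hlam hP) ⟨1, h1⟩ ⟨0, fun β hβ => hβ.1.le⟩
    (bddAbove_setI hFmono hlam hP hB hFB)
  refine ⟨_, _, hI, hI ▸ h1, hI ▸ fun β hβ => ?_⟩
  have hβ2 := apply_one_lt_sq_of_mem_setI hFmono hlam ht1 hβ
  rw [(hF 1).trans (normalized_prod_one_add hm)] at hβ2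
  have hm1 : 1 / (m : ℝ) ≤ 1 :=
    div_le_one_of_le₀ (by exact_mod_cast (by omega : 1 ≤ m)) (by positivity)
  rw [mem_Ioi]
  by_contra! hle
  nlinarith [hβ.1]
end

section
/- Let H be a separable Hilbert space, 0 < s ≤ 2, and let T : P → P be defined on the set P of probability laws μ = L(Z) on H with E‖Z‖^s < ∞ (and additionally EZ = 0 if 1 < s ≤ 2) by T(L(Z)) = L(∑_{r=1}^m A_r*(Z^{(r)}) + b*), where A_1*,…,A_m* are random bounded linear operators on H with E‖A_r*‖_op^s < ∞, b* is an H-valued random variable with E‖b*‖^s < ∞ (and Eb* = 0 if s > 1), (A_1*,…,A_m*,b*) is independent of the independent copies Z^{(1)},…,Z^{(m)} of Z. If E ∑_{r=1}^m ‖A_r*‖_op^s < 1, then T is a strict contraction with respect to the Zolotarev metric ζ_s: ζ_s(T(μ), T(ν)) ≤ (E ∑_r ‖A_r*‖_op^s) · ζ_s(μ, ν) for all μ, ν ∈ P. -/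
/-!
Conditioning on `(A_1*, …, A_m*, b*)` reduces the claim to deterministic operators. For a fixed
operator `A` and shift `c`, the function `(‖A‖ ^ s)⁻¹ f (A · + c)` again lies in `F_s` whenever
`f` does, because its `m`-th derivative is that of `f` composed with `m` copies of `A`; hence
`ζ_s(A X + c, A Y + c) ≤ ‖A‖^s ζ_s(X, Y)`. Replacing the copies `Z^{(r)} ~ μ` by `Z^{(r)} ~ ν`
one at a time and applying this bound to the coordinate being replaced (the other coordinates
are absorbed into the shift `c`, by Fubini) costs `E ‖A_r*‖^s · ζ_s(μ, ν)` per step. For `s ≤ 2`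
every test function grows at most like `1 + ‖z‖^s`, which together with the moment assumptions
makes all the integrals involved finite.
-/

open MeasureTheory ENNReal

section ZolotarevTest

variable {E F : Type*} [NormedAddCommGroup E] [NormedSpace ℝ E]
  [NormedAddCommGroup F] [NormedSpace ℝ F]

lemma natCast_ceil_sub_one_le {s : ℝ} (hs : 0 ≤ s) : ((⌈s⌉₊ - 1 : ℕ) : ℝ) ≤ s := by
  rcases Nat.eq_zero_or_pos ⌈s⌉₊ with h | h
  · simpa [h] using hs
  · have := Nat.ceil_lt_add_one hs
    push_cast [Nat.cast_sub h]
    linarith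

lemma norm_iteratedFDeriv_zero_sub (f : E → F) (x y : E) :
    ‖iteratedFDeriv ℝ 0 f x - iteratedFDeriv ℝ 0 f y‖ = ‖f x - f y‖ := by
  simp only [iteratedFDeriv_zero_eq_comp, Function.comp_apply, ← map_sub,
    LinearIsometryEquiv.norm_map]

lemma norm_iteratedFDeriv_one_sub (f : E → F) (x y : E) :
    ‖iteratedFDeriv ℝ 1 f x - iteratedFDeriv ℝ 1 f y‖ = ‖fderiv ℝ f x - fderiv ℝ f y‖ := by
  have h : ∀ z, iteratedFDeriv ℝ 1 f z =
      (continuousMultilinearCurryFin1 ℝ E F).symm (fderiv ℝ f z) := by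
    intro z
    ext v
    simp [iteratedFDeriv_one_apply]
  rw [h, h, ← map_sub, LinearIsometryEquiv.norm_map]

/-- The class `F_s` of the paper: `m = ⌈s⌉ - 1` times continuously differentiable functions whose
`m`-th derivative is `(s - m)`-Hölder with constant `1`. -/
def IsZolotarevTest (s : ℝ) (f : E → ℝ) : Prop :=
  ContDiff ℝ (⌈s⌉₊ - 1) f ∧
    ∀ x y : E, ‖iteratedFDeriv ℝ (⌈s⌉₊ - 1) f x - iteratedFDeriv ℝ (⌈s⌉₊ - 1) f y‖ ≤
      ‖x - y‖ ^ (s - (⌈s⌉₊ - 1 : ℕ))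

namespace IsZolotarevTest

variable {s : ℝ} {f : F → ℝ}

lemma norm_iteratedFDeriv_comp_affine_sub_le (hf : IsZolotarevTest s f) (hs : 0 < s)
    (A : E →L[ℝ] F) (c : F) (x y : E) :
    ‖iteratedFDeriv ℝ (⌈s⌉₊ - 1) (fun z => f (A z + c)) x -
        iteratedFDeriv ℝ (⌈s⌉₊ - 1) (fun z => f (A z + c)) y‖ ≤
      ‖A‖ ^ s * ‖x - y‖ ^ (s - (⌈s⌉₊ - 1 : ℕ)) := by
  set m := ⌈s⌉₊ - 1
  have hm : ((m : ℕ) : WithTop ℕ∞) ≤ ↑⌈s⌉₊ - 1 := by norm_cast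
  have hms : 0 ≤ s - m := sub_nonneg.2 (natCast_ceil_sub_one_le hs.le)
  have hderiv : ∀ z, iteratedFDeriv ℝ m (fun z => f (A z + c)) z =
      (iteratedFDeriv ℝ m f (A z + c)).compContinuousLinearMap fun _ => A := by
    intro z
    rw [show (fun z => f (A z + c)) = (fun w => f (w + c)) ∘ A from rfl,
      A.iteratedFDeriv_comp_right (f := fun w => f (w + c))
        (hf.1.comp (contDiff_id.add contDiff_const)) z hm,
      iteratedFDeriv_comp_add_right]
  calc _ = ‖ContinuousMultilinearMap.compContinuousLinearMapL (fun _ => A)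
          (iteratedFDeriv ℝ m f (A x + c) - iteratedFDeriv ℝ m f (A y + c))‖ := by
        rw [map_sub, hderiv, hderiv]; rfl
    _ ≤ ‖iteratedFDeriv ℝ m f (A x + c) - iteratedFDeriv ℝ m f (A y + c)‖ * ∏ _ : Fin m, ‖A‖ :=
        ContinuousMultilinearMap.norm_compContinuousLinearMap_le _ _
    _ ≤ (‖A‖ * ‖x - y‖) ^ (s - m) * ‖A‖ ^ m := by
        rw [Finset.prod_const, Finset.card_univ, Fintype.card_fin]
        gcongr
        refine (hf.2 _ _).trans ?_
        rw [add_sub_add_right_eq_sub, ← map_sub]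
        gcongr
        exact A.le_opNorm _
    _ = ‖A‖ ^ s * ‖x - y‖ ^ (s - m) := by
        rw [Real.mul_rpow (norm_nonneg _) (norm_nonneg _), mul_right_comm, ← Real.rpow_natCast,
          ← Real.rpow_add' (norm_nonneg _) (by simpa using hs.ne'), sub_add_cancel]

/-- For `A = 0` the factor `(‖A‖ ^ s)⁻¹` is `0⁻¹ = 0`, so no hypothesis on `A` is needed. -/
lemma inv_rpow_mul_comp_affine (hf : IsZolotarevTest s f) (hs : 0 < s) (A : E →L[ℝ] F) (c : F) :
    IsZolotarevTest s (fun z => (‖A‖ ^ s)⁻¹ * f (A z + c)) := by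
  have hF : ContDiff ℝ (⌈s⌉₊ - 1) (fun z => f (A z + c)) :=
    hf.1.comp (A.contDiff.add contDiff_const)
  refine ⟨hF.const_smul (‖A‖ ^ s)⁻¹, fun x y => ?_⟩
  have hm : ((⌈s⌉₊ - 1 : ℕ) : WithTop ℕ∞) ≤ ↑⌈s⌉₊ - 1 := by norm_cast
  rw [show (fun z => (‖A‖ ^ s)⁻¹ * f (A z + c)) = (‖A‖ ^ s)⁻¹ • fun z => f (A z + c) from rfl,
    iteratedFDeriv_const_smul_apply ((hF.of_le hm).contDiffAt),
    iteratedFDeriv_const_smul_apply ((hF.of_le hm).contDiffAt), ← smul_sub, norm_smul,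
    Real.norm_of_nonneg (by positivity)]
  calc _ ≤ (‖A‖ ^ s)⁻¹ * (‖A‖ ^ s * ‖x - y‖ ^ (s - (⌈s⌉₊ - 1 : ℕ))) := by
        gcongr
        exact hf.norm_iteratedFDeriv_comp_affine_sub_le hs A c x y
    _ ≤ ‖x - y‖ ^ (s - (⌈s⌉₊ - 1 : ℕ)) := by
        rw [← mul_assoc]
        exact mul_le_of_le_one_left (by positivity) inv_mul_le_one

lemma exists_abs_le (hf : IsZolotarevTest s f) (hs0 : 0 < s) (hs2 : s ≤ 2) :
    ∃ C, ∀ z, |f z| ≤ C * (1 + ‖z‖ ^ s) := by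
  have hsz : ∀ z : F, 0 ≤ ‖z‖ ^ s := fun z => by positivity
  obtain ⟨hcd, hlip⟩ := hf
  replace hcd : ContDiff ℝ ((⌈s⌉₊ - 1 : ℕ) : WithTop ℕ∞) f := hcd.of_le (by norm_cast)
  have h1 : 1 ≤ ⌈s⌉₊ := Nat.one_le_ceil_iff.mpr hs0
  have h2 : ⌈s⌉₊ ≤ 2 := Nat.ceil_le.mpr (by exact_mod_cast hs2)
  generalize hm : ⌈s⌉₊ - 1 = m at hcd hlip
  obtain rfl | rfl : m = 0 ∨ m = 1 := by omega
  · simp only [norm_iteratedFDeriv_zero_sub, CharP.cast_eq_zero, sub_zero,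
      Real.norm_eq_abs] at hlip
    refine ⟨|f 0| + 1, fun z => ?_⟩
    have := abs_sub_abs_le_abs_sub (f z) (f 0)
    have := hlip z 0
    rw [sub_zero] at this
    nlinarith [abs_nonneg (f 0), hsz z]
  · have hs1 : 1 < s := by exact_mod_cast Nat.lt_ceil.mp (by omega : 1 < ⌈s⌉₊)
    simp only [norm_iteratedFDeriv_one_sub, Nat.cast_one] at hlip
    have hdf : Differentiable ℝ f := hcd.differentiable (by norm_num)
    refine ⟨|f 0| + ‖fderiv ℝ f 0‖ + 1, fun z => ?_⟩
    have hball : ∀ w ∈ Metric.closedBall (0 : F) ‖z‖,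
        ‖fderiv ℝ f w‖ ≤ ‖fderiv ℝ f 0‖ + ‖z‖ ^ (s - 1) := by
      intro w hw
      rw [mem_closedBall_zero_iff] at hw
      calc ‖fderiv ℝ f w‖ ≤ ‖fderiv ℝ f 0‖ + ‖fderiv ℝ f w - fderiv ℝ f 0‖ := norm_le_insert' _ _
        _ ≤ ‖fderiv ℝ f 0‖ + ‖z‖ ^ (s - 1) := by
          gcongr
          refine (hlip w 0).trans ?_
          rw [sub_zero]
          gcongr
    have hmvt := (convex_closedBall (0 : F) ‖z‖).norm_image_sub_le_of_norm_fderiv_le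
      (fun w _ => hdf w) hball (Metric.mem_closedBall_self (norm_nonneg z))
      (mem_closedBall_zero_iff.2 le_rfl)
    rw [sub_zero, Real.norm_eq_abs] at hmvt
    have hpow : ‖z‖ ^ (s - 1) * ‖z‖ = ‖z‖ ^ s := by
      rw [← Real.rpow_add_one' (norm_nonneg _) (by linarith), sub_add_cancel]
    have hz : ‖z‖ ≤ 1 + ‖z‖ ^ s := by
      rcases le_total ‖z‖ 1 with h | h
      · linarith [hsz z]
      · have := Real.rpow_le_rpow_of_exponent_le h hs1.le
        rw [Real.rpow_one] at this
        linarith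
    have := abs_sub_abs_le_abs_sub (f z) (f 0)
    nlinarith [abs_nonneg (f 0), norm_nonneg (fderiv ℝ f 0), hsz z]

lemma integrable_comp {α : Type*} [MeasurableSpace α] {μ : Measure α} [IsFiniteMeasure μ]
    (hf : IsZolotarevTest s f) (hs0 : 0 < s) (hs2 : s ≤ 2) {g : α → F}
    (hg : MemLp g (ENNReal.ofReal s) μ) : Integrable (fun a => f (g a)) μ := by
  obtain ⟨C, hC⟩ := hf.exists_abs_le hs0 hs2
  have hgs : Integrable (fun a => ‖g a‖ ^ s) μ := by
    simpa [ENNReal.toReal_ofReal hs0.le] using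
      hg.integrable_norm_rpow (by simpa using hs0) ENNReal.ofReal_ne_top
  refine (((integrable_const 1).add hgs).const_mul C).mono'
    ((hf.1.continuous.comp_aestronglyMeasurable hg.1)) (ae_of_all _ fun a => ?_)
  simpa using hC (g a)

end IsZolotarevTest

variable {s D : ℝ} {f : F → ℝ}

lemma abs_integral_comp_affine_sub_le [MeasurableSpace E] (hs : 0 < s) {μ ν : Measure E}
    [IsProbabilityMeasure μ] [IsProbabilityMeasure ν]
    (hD : ∀ g, IsZolotarevTest s g → |∫ x, g x ∂μ - ∫ x, g x ∂ν| ≤ D)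
    (hf : IsZolotarevTest s f) (A : E →L[ℝ] F) (c : F) :
    |∫ x, f (A x + c) ∂μ - ∫ x, f (A x + c) ∂ν| ≤ ‖A‖ ^ s * D := by
  rcases eq_or_ne A 0 with rfl | hA
  · simp [Real.zero_rpow hs.ne']
  have ht : 0 < ‖A‖ ^ s := Real.rpow_pos_of_pos (norm_pos_iff.2 hA) s
  have := hD _ (hf.inv_rpow_mul_comp_affine hs A c)
  rwa [integral_const_mul, integral_const_mul, ← mul_sub, abs_mul, abs_inv, abs_of_pos ht,
    inv_mul_le_iff₀ ht] at this

end ZolotarevTest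

lemma norm_integral_prod_sub_le {X Y V : Type*} [MeasurableSpace X] [MeasurableSpace Y]
    [NormedAddCommGroup V] [NormedSpace ℝ V] {ξ : Measure X} {α β : Measure Y}
    [SFinite ξ] [SFinite α] [SFinite β] {G : X × Y → V}
    (hα : Integrable G (ξ.prod α)) (hβ : Integrable G (ξ.prod β)) {B : X → ℝ}
    (hB : Integrable B ξ) (h : ∀ᵐ x ∂ξ, ‖∫ y, G (x, y) ∂α - ∫ y, G (x, y) ∂β‖ ≤ B x) :
    ‖∫ z, G z ∂ξ.prod α - ∫ z, G z ∂ξ.prod β‖ ≤ ∫ x, B x ∂ξ := by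
  rw [integral_prod _ hα, integral_prod _ hβ,
    ← integral_sub hα.integral_prod_left hβ.integral_prod_left]
  exact norm_integral_le_of_norm_le hB h

section Hybrid

variable {α : Type*} {m : ℕ} {x y : α}

def hybrid (x y : α) (j : ℕ) : Fin m → α := fun r => if (r : ℕ) < j then y else x

lemma hybrid_zero : hybrid (m := m) x y 0 = fun _ => x :=
  funext fun r => if_neg (Nat.not_lt_zero r)

lemma hybrid_of_le {j : ℕ} (h : m ≤ j) : hybrid (m := m) x y j = fun _ => y :=
  funext fun r => if_pos (r.isLt.trans_le h)

lemma hybrid_apply_self {j : ℕ} (hj : j < m) : hybrid x y j ⟨j, hj⟩ = x :=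
  if_neg (lt_irrefl j)

lemma hybrid_succ {j : ℕ} (hj : j < m) :
    hybrid x y (j + 1) = Function.update (hybrid x y j) ⟨j, hj⟩ y := by
  funext r
  rcases eq_or_ne r ⟨j, hj⟩ with rfl | hr
  · simp [hybrid]
  · have : (r : ℕ) ≠ j := fun h => hr (Fin.ext h)
    simp only [hybrid, Function.update_of_ne hr]
    congr 1
    exact propext (by omega)

lemma forall_hybrid {p : α → Prop} (hx : p x) (hy : p y) (j : ℕ) :
    ∀ r : Fin m, p (hybrid x y j r) := by
  intro r
  unfold hybrid
  split_ifs <;> assumption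

lemma abs_sub_le_sum_of_hybrid (I : (Fin m → α) → ℝ) (c : Fin m → ℝ)
    (h : ∀ j (hj : j < m),
      |I (hybrid x y j) - I (Function.update (hybrid x y j) ⟨j, hj⟩ y)| ≤ c ⟨j, hj⟩) :
    |I (fun _ => x) - I (fun _ => y)| ≤ ∑ k, c k := by
  have htel : I (fun _ => x) - I (fun _ => y) =
      ∑ k : Fin m, (I (hybrid x y k) - I (hybrid x y (k + 1))) := by
    rw [Fin.sum_univ_eq_sum_range (fun j => I (hybrid x y j) - I (hybrid x y (j + 1))),
      Finset.sum_range_sub', hybrid_zero, hybrid_of_le le_rfl]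
  rw [htel]
  refine (Finset.abs_sum_le_sum_abs _ _).trans (Finset.sum_le_sum fun k _ => ?_)
  simpa [hybrid_succ k.isLt] using h k k.isLt

end Hybrid

lemma integrable_rpow_norm_of_lintegral_lt_top {E : Type*} [NormedAddCommGroup E]
    [MeasurableSpace E] [OpensMeasurableSpace E] {μ : Measure E} {s : ℝ}
    (h : ∫⁻ x, (‖x‖₊ : ℝ≥0∞) ^ s ∂μ < ⊤) (hs : 0 ≤ s) : Integrable (fun x => ‖x‖ ^ s) μ := by
  refine ⟨by fun_prop, ?_⟩
  rw [hasFiniteIntegral_iff_enorm]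
  simpa [Real.enorm_rpow_of_nonneg (norm_nonneg _) hs, enorm_eq_nnnorm] using h

section Contraction

variable {E F : Type*} [NormedAddCommGroup E] [NormedSpace ℝ E] [MeasurableSpace E]
  [NormedAddCommGroup F] [NormedSpace ℝ F] {s D : ℝ} {f : F → ℝ}

lemma abs_integral_pi_update_sub_le {m : ℕ} (hs : 0 < s) (A : Fin m → E →L[ℝ] F) (c : F)
    (κ : Fin m → Measure E) [∀ r, IsProbabilityMeasure (κ r)] (k : Fin m) (ρ : Measure E)
    [IsProbabilityMeasure ρ]
    (hD : ∀ g, IsZolotarevTest s g → |∫ x, g x ∂κ k - ∫ x, g x ∂ρ| ≤ D)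
    (hf : IsZolotarevTest s f)
    (hκ : Integrable (fun z => f (∑ r, A r (z r) + c)) (Measure.pi κ))
    (hρ : Integrable (fun z => f (∑ r, A r (z r) + c)) (Measure.pi (Function.update κ k ρ))) :
    |∫ z, f (∑ r, A r (z r) + c) ∂Measure.pi κ -
        ∫ z, f (∑ r, A r (z r) + c) ∂Measure.pi (Function.update κ k ρ)| ≤ ‖A k‖ ^ s * D := by
  obtain ⟨n, rfl⟩ : ∃ n, m = n + 1 := Nat.exists_eq_succ_of_ne_zero k.pos.ne'
  -- `e` splits off coordinate `k` and puts it last, so that Fubini integrates it innermost.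
  let e := (MeasurableEquiv.piFinSuccAbove (fun _ => E) k).trans MeasurableEquiv.prodComm
  have he : ∀ σ : Fin (n + 1) → Measure E, (∀ r, IsProbabilityMeasure (σ r)) →
      MeasurePreserving e (Measure.pi σ) ((Measure.pi fun j => σ (k.succAbove j)).prod (σ k)) :=
    fun σ _ => Measure.measurePreserving_swap.comp (measurePreserving_piFinSuccAbove σ k)
  have hκ' := he κ inferInstance
  have hρ' := he (Function.update κ k ρ) <|
    (Function.forall_update_iff κ fun _ σ => IsProbabilityMeasure σ).2
      ⟨inferInstance, fun _ _ => inferInstance⟩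
  rw [Function.update_self, show (fun j => Function.update κ k ρ (k.succAbove j)) =
    fun j => κ (k.succAbove j) from funext fun j => Function.update_of_ne (k.succAbove_ne j) _ _]
    at hρ'
  let G : (Fin n → E) × E → ℝ := fun q => f (A k q.2 + (∑ j, A (k.succAbove j) (q.1 j) + c))
  have hG : ∀ z, G (e z) = f (∑ r, A r (z r) + c) := by
    intro z
    change f (A k (z k) + (∑ j, A (k.succAbove j) (z (k.succAbove j)) + c)) = _
    rw [Fin.sum_univ_succAbove _ k, add_assoc]
  simp_rw [← hG] at hκ hρ ⊢
  rw [hκ'.integral_comp' G, hρ'.integral_comp' G]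
  have := norm_integral_prod_sub_le (G := G)
    ((hκ'.integrable_comp_emb e.measurableEmbedding (g := G)).1 hκ)
    ((hρ'.integrable_comp_emb e.measurableEmbedding (g := G)).1 hρ)
    (integrable_const (‖A k‖ ^ s * D)) (ae_of_all _ fun y =>
      (Real.norm_eq_abs _).trans_le (abs_integral_comp_affine_sub_le hs hD hf (A k)
        (∑ j, A (k.succAbove j) (y j) + c)))
  simpa using this

variable [MeasurableSpace F] [BorelSpace F] [SecondCountableTopology F]
  {Ω : Type*} [MeasurableSpace Ω] {m : ℕ} {A : Fin m → Ω → E →L[ℝ] F} {b : Ω → F}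

lemma measurable_sum_apply_add (hA : ∀ r, Measurable fun p : Ω × E => A r p.1 p.2)
    (hb : Measurable b) : Measurable fun p : Ω × (Fin m → E) => ∑ r, A r p.1 (p.2 r) + b p.1 :=
  (Finset.measurable_sum _ fun r _ =>
    (hA r).comp (measurable_fst.prodMk ((measurable_pi_apply r).comp measurable_snd))).add
    (hb.comp measurable_fst)

lemma memLp_sum_apply_add (hs : 0 < s) (P : Measure Ω) [IsProbabilityMeasure P]
    (hA : ∀ r, Measurable fun p : Ω × E => A r p.1 p.2)
    (hAint : ∀ r, Integrable (fun ω => ‖A r ω‖ ^ s) P)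
    (hb : Measurable b) (hbint : Integrable (fun ω => ‖b ω‖ ^ s) P)
    (κ : Fin m → Measure E) [∀ r, IsProbabilityMeasure (κ r)]
    (hκ : ∀ r, Integrable (fun x => ‖x‖ ^ s) (κ r)) :
    MemLp (fun p : Ω × (Fin m → E) => ∑ r, A r p.1 (p.2 r) + b p.1) (ENNReal.ofReal s)
      (P.prod (Measure.pi κ)) := by
  have hmemLp : ∀ {g : Ω × (Fin m → E) → F}, Measurable g →
      Integrable (fun p => ‖g p‖ ^ s) (P.prod (Measure.pi κ)) →
      MemLp g (ENNReal.ofReal s) (P.prod (Measure.pi κ)) := fun hg h =>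
    (integrable_norm_rpow_iff hg.aestronglyMeasurable (by simpa using hs) ofReal_ne_top).1
      (by simpa [ENNReal.toReal_ofReal hs.le] using h)
  refine (memLp_finsetSum _ fun r _ => hmemLp ?_ ?_).add (hmemLp (hb.comp measurable_fst) ?_)
  · exact (hA r).comp (measurable_fst.prodMk ((measurable_pi_apply r).comp measurable_snd))
  · refine ((hAint r).mul_prod ((measurePreserving_eval κ r).integrable_comp_of_integrable
      (hκ r))).mono' ?_ (ae_of_all _ fun p => ?_)
    · exact (((hA r).comp (measurable_fst.prodMk
        ((measurable_pi_apply r).comp measurable_snd))).norm.pow_const s).aestronglyMeasurable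
    · rw [Real.norm_of_nonneg (by positivity), Function.comp_apply, Function.eval,
        ← Real.mul_rpow (norm_nonneg _) (norm_nonneg _)]
      exact Real.rpow_le_rpow (norm_nonneg _) ((A r p.1).le_opNorm _) hs.le
  · exact hbint.comp_fst _

lemma abs_integral_prod_pi_update_sub_le (hs0 : 0 < s) (hs2 : s ≤ 2) (P : Measure Ω)
    [IsProbabilityMeasure P] (hA : ∀ r, Measurable fun p : Ω × E => A r p.1 p.2)
    (hAint : ∀ r, Integrable (fun ω => ‖A r ω‖ ^ s) P)
    (hb : Measurable b) (hbint : Integrable (fun ω => ‖b ω‖ ^ s) P)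
    (κ : Fin m → Measure E) [∀ r, IsProbabilityMeasure (κ r)]
    (hκ : ∀ r, Integrable (fun x => ‖x‖ ^ s) (κ r)) (k : Fin m) (ρ : Measure E)
    [IsProbabilityMeasure ρ] (hρ : Integrable (fun x => ‖x‖ ^ s) ρ)
    (hD : ∀ g, IsZolotarevTest s g → |∫ x, g x ∂κ k - ∫ x, g x ∂ρ| ≤ D)
    (hf : IsZolotarevTest s f) :
    |∫ p, f (∑ r, A r p.1 (p.2 r) + b p.1) ∂P.prod (Measure.pi κ) -
        ∫ p, f (∑ r, A r p.1 (p.2 r) + b p.1) ∂P.prod (Measure.pi (Function.update κ k ρ))| ≤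
      (∫ ω, ‖A k ω‖ ^ s ∂P) * D := by
  have hint : ∀ σ : Fin m → Measure E, ∀ [∀ r, IsProbabilityMeasure (σ r)],
      (∀ r, Integrable (fun x => ‖x‖ ^ s) (σ r)) →
      Integrable (fun p => f (∑ r, A r p.1 (p.2 r) + b p.1)) (P.prod (Measure.pi σ)) :=
    fun σ _ hσ => hf.integrable_comp hs0 hs2 (memLp_sum_apply_add hs0 P hA hAint hb hbint σ hσ)
  have : ∀ r, IsProbabilityMeasure (Function.update κ k ρ r) :=
    (Function.forall_update_iff κ fun _ σ => IsProbabilityMeasure σ).2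
      ⟨inferInstance, fun _ _ => inferInstance⟩
  have hκ' := hint κ hκ
  have hρ' := hint (Function.update κ k ρ)
    ((Function.forall_update_iff κ fun _ σ => Integrable (fun x => ‖x‖ ^ s) σ).2
      ⟨hρ, fun r _ => hκ r⟩)
  rw [← integral_mul_const, ← Real.norm_eq_abs]
  refine norm_integral_prod_sub_le hκ' hρ' ((hAint k).mul_const D) ?_
  filter_upwards [hκ'.prod_right_ae, hρ'.prod_right_ae] with ω hκω hρω
  exact (Real.norm_eq_abs _).trans_le
    (abs_integral_pi_update_sub_le hs0 (A · ω) (b ω) κ k ρ hD hf hκω hρω)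

end Contraction

theorem stmt17_general {H : Type*} [NormedAddCommGroup H] [InnerProductSpace ℝ H]
    [TopologicalSpace.SeparableSpace H]
    [MeasurableSpace H] [BorelSpace H]
    (s : ℝ) (hs0 : 0 < s) (hs2 : s ≤ 2)
    (mm : ℕ)
    {Ω : Type*} [MeasurableSpace Ω] (P : Measure Ω) [IsProbabilityMeasure P]
    (A : Fin mm → Ω → (H →L[ℝ] H))
    (hAmeas : ∀ r, Measurable fun p : Ω × H => A r p.1 p.2)
    (hAint : ∀ r, Integrable (fun ω => ‖A r ω‖ ^ s) P)
    (b : Ω → H) (hb : Measurable b)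
    (hbint : Integrable (fun ω => ‖b ω‖ ^ s) P)
    (μ ν : Measure H) [IsProbabilityMeasure μ] [IsProbabilityMeasure ν]
    (hμmom : ∫⁻ x, (‖x‖₊ : ℝ≥0∞) ^ s ∂μ < ⊤)
    (hνmom : ∫⁻ x, (‖x‖₊ : ℝ≥0∞) ^ s ∂ν < ⊤) :
    ∀ D : ℝ, 0 ≤ D →
      (∀ f : H → ℝ, ContDiff ℝ (⌈s⌉₊ - 1) f →
        (∀ x y : H, ‖iteratedFDeriv ℝ (⌈s⌉₊ - 1) f x - iteratedFDeriv ℝ (⌈s⌉₊ - 1) f y‖ ≤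
          ‖x - y‖ ^ (s - (⌈s⌉₊ - 1 : ℕ))) →
        |∫ x, f x ∂μ - ∫ x, f x ∂ν| ≤ D) →
      ∀ f : H → ℝ, ContDiff ℝ (⌈s⌉₊ - 1) f →
        (∀ x y : H, ‖iteratedFDeriv ℝ (⌈s⌉₊ - 1) f x - iteratedFDeriv ℝ (⌈s⌉₊ - 1) f y‖ ≤
          ‖x - y‖ ^ (s - (⌈s⌉₊ - 1 : ℕ))) →
        |(∫ x, f x ∂(Measure.map
              (fun p : Ω × (Fin mm → H) => (∑ r, A r p.1 (p.2 r)) + b p.1)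
              (P.prod (Measure.pi fun _ : Fin mm => μ)))) -
          ∫ x, f x ∂(Measure.map
              (fun p : Ω × (Fin mm → H) => (∑ r, A r p.1 (p.2 r)) + b p.1)
              (P.prod (Measure.pi fun _ : Fin mm => ν)))| ≤
          (∫ ω, ∑ r, ‖A r ω‖ ^ s ∂P) * D := by
  intro D _ hD f hf hlip
  have hmeas := measurable_sum_apply_add hAmeas hb
  have hμ := integrable_rpow_norm_of_lintegral_lt_top hμmom hs0.le
  have hν := integrable_rpow_norm_of_lintegral_lt_top hνmom hs0.le
  rw [integral_map hmeas.aemeasurable hf.continuous.aestronglyMeasurable,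
    integral_map hmeas.aemeasurable hf.continuous.aestronglyMeasurable,
    integral_finsetSum _ fun r _ => hAint r, Finset.sum_mul]
  refine abs_sub_le_sum_of_hybrid
    (fun κ => ∫ p, f (∑ r, A r p.1 (p.2 r) + b p.1) ∂P.prod (Measure.pi κ)) _ fun j hj => ?_
  have : ∀ r : Fin mm, IsProbabilityMeasure (hybrid μ ν j r) :=
    forall_hybrid (p := IsProbabilityMeasure) ‹_› ‹_› j
  refine abs_integral_prod_pi_update_sub_le hs0 hs2 P hAmeas hAint hb hbint _
    (forall_hybrid hμ hν j) _ ν hν ?_ ⟨hf, hlip⟩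
  rw [hybrid_apply_self]
  exact fun g hg => hD g hg.1 hg.2

/-- Lemma 6.2: on a separable Hilbert space `H`, the map
`T(L(Z)) = L(∑_r A_r*(Z^{(r)}) + b*)`, with `(A_1*,…,A_m*,b*)` independent of the
i.i.d. copies `Z^{(r)}` of `Z` (realized here via the product measure
`P ⊗ μ^{⊗m}`), is a strict contraction in the Zolotarev metric `ζ_s`
(`0 < s ≤ 2`) on laws with finite `s`-th moment (centered when `1 < s ≤ 2`),
with contraction factor `E ∑_r ‖A_r*‖_op^s < 1`: for any bound `D` on
`ζ_s(μ,ν)` (i.e., on `|∫ f dμ - ∫ f dν|` over `f ∈ F_s`),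
`ζ_s(Tμ, Tν) ≤ (E ∑_r ‖A_r*‖_op^s)·D`. -/
theorem stmt17 {H : Type*} [NormedAddCommGroup H] [InnerProductSpace ℝ H]
    [CompleteSpace H] [TopologicalSpace.SeparableSpace H]
    [MeasurableSpace H] [BorelSpace H]
    (s : ℝ) (hs0 : 0 < s) (hs2 : s ≤ 2)
    (mm : ℕ)
    {Ω : Type*} [MeasurableSpace Ω] (P : Measure Ω) [IsProbabilityMeasure P]
    (A : Fin mm → Ω → (H →L[ℝ] H))
    (hAmeas : ∀ r, Measurable fun p : Ω × H => A r p.1 p.2)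
    (hAint : ∀ r, Integrable (fun ω => ‖A r ω‖ ^ s) P)
    (b : Ω → H) (hb : Measurable b)
    (hbint : Integrable (fun ω => ‖b ω‖ ^ s) P)
    (hbcent : 1 < s → ∫ ω, b ω ∂P = 0)
    (hcontr : ∫ ω, ∑ r, ‖A r ω‖ ^ s ∂P < 1)
    (μ ν : Measure H) [IsProbabilityMeasure μ] [IsProbabilityMeasure ν]
    (hμmom : ∫⁻ x, (‖x‖₊ : ℝ≥0∞) ^ s ∂μ < ⊤)
    (hνmom : ∫⁻ x, (‖x‖₊ : ℝ≥0∞) ^ s ∂ν < ⊤)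
    (hμcent : 1 < s → ∫ x, x ∂μ = 0)
    (hνcent : 1 < s → ∫ x, x ∂ν = 0) :
    ∀ D : ℝ, 0 ≤ D →
      (∀ f : H → ℝ, ContDiff ℝ (⌈s⌉₊ - 1) f →
        (∀ x y : H, ‖iteratedFDeriv ℝ (⌈s⌉₊ - 1) f x - iteratedFDeriv ℝ (⌈s⌉₊ - 1) f y‖ ≤
          ‖x - y‖ ^ (s - (⌈s⌉₊ - 1 : ℕ))) →
        |∫ x, f x ∂μ - ∫ x, f x ∂ν| ≤ D) →
      ∀ f : H → ℝ, ContDiff ℝ (⌈s⌉₊ - 1) f →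
        (∀ x y : H, ‖iteratedFDeriv ℝ (⌈s⌉₊ - 1) f x - iteratedFDeriv ℝ (⌈s⌉₊ - 1) f y‖ ≤
          ‖x - y‖ ^ (s - (⌈s⌉₊ - 1 : ℕ))) →
        |(∫ x, f x ∂(Measure.map
              (fun p : Ω × (Fin mm → H) => (∑ r, A r p.1 (p.2 r)) + b p.1)
              (P.prod (Measure.pi fun _ : Fin mm => μ)))) -
          ∫ x, f x ∂(Measure.map
              (fun p : Ω × (Fin mm → H) => (∑ r, A r p.1 (p.2 r)) + b p.1)
              (P.prod (Measure.pi fun _ : Fin mm => ν)))| ≤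
          (∫ ω, ∑ r, ‖A r ω‖ ^ s ∂P) * D :=
  stmt17_general s hs0 hs2 mm P A hAmeas hAint b hb hbint μ ν hμmom hνmom
end

section
/- Let λ(z) be a bounded function on a parameter set K, and for z ∈ K let φ_z be analytic on a Δ-domain Δ = Δ(R, δ) with φ_z(ζ) = O(1) uniformly for |1-ζ| ≥ η and φ_z(ζ) = O(|1-ζ|^{-α} |log|1-ζ||^d) uniformly for |1-ζ| ≤ η (z ∈ K, ζ ∈ Δ), where α ∈ ℝ, d ≥ 0, 0 < η < min(1/2, R-1). Then the function Ψ_z(ζ) := Ψ_z(0)(1-ζ)^{-λ(z)} + (1-ζ)^{-λ(z)} ∫_0^ζ (1-w)^{λ(z)-1} φ_z(w) dw, with Ψ_z(0) = O(1) uniformly in z, is analytic on Δ and satisfies Ψ_z(ζ) = O(1) for |1-ζ| ≥ η and Ψ_z(ζ) = O(|1-ζ|^{-max(α, Re λ(z))} |log|1-ζ||^{d+1}) for |1-ζ| ≤ η, uniformly in z ∈ K and ζ ∈ Δ. -/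
/-!
Write `r = |1 - ζ|`. The primitive `g` of `(1 - w)^(λ-1) φ(w)` is bounded where `r ≥ η` by
integrating along a path of length `O(1)` on which the integrand is `O(1)`: the real segment from
`0` to `1 - r`, then the arc of radius `r` about `1` up to `ζ`. The arc stays in `Δ` because
rotating `1 - r e^{is}` towards `s = 0` only brings it closer to the origin. For `r ≤ η`, integrate
radially from `ζ' = 1 - η e^{i arg(1-ζ)}` to `ζ`: at distance `s ∈ [r, η]` from `1` the integrand
is `O(s^(Re λ - α - 1) |log s|^d) = O(r^min(Re λ - α, 0) s⁻¹ |log s|^d)`, and `s⁻¹ |log s|^d` is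
`-(d+1)⁻¹` times the derivative of `|log s|^(d+1)`, so
`g(ζ) = O(1) + O(r^min(Re λ - α, 0) |log r|^(d+1))`. Multiplying by
`|(1-ζ)^(-λ)| ≤ e^(π(L+1)) r^(-Re λ)` turns the exponent into `-max(α, Re λ)`. Every constant
depends only on `R, η, L, C_φ, C₀, d`, which gives the uniformity in `z`.
-/

open Complex Real Set

def deltaDomain (R δ : ℝ) : Set ℂ := {ζ | ‖ζ‖ < R ∧ π / 2 - δ < |arg (ζ - 1)|}

theorem Complex.abs_arg_neg {u : ℂ} (hu : u ≠ 0) : |arg (-u)| = π - |arg u| := by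
  refine Real.injOn_cos ⟨abs_nonneg _, abs_arg_le_pi _⟩
    ⟨by linarith [abs_arg_le_pi u], by linarith [abs_nonneg (arg u)]⟩ ?_
  rw [Real.cos_abs, Real.cos_pi_sub, Real.cos_abs, cos_arg (neg_ne_zero.2 hu), cos_arg hu,
    neg_re, norm_neg, neg_div]

theorem Complex.abs_arg_ofReal_mul_exp_mul_I {s ψ : ℝ} (hs : 0 < s) (hψ : |ψ| ≤ π) :
    |arg (s * exp (ψ * I))| = |ψ| := by
  rw [arg_real_mul _ hs]
  refine Real.injOn_cos ⟨abs_nonneg _, abs_arg_le_pi _⟩ ⟨abs_nonneg _, hψ⟩ ?_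
  rw [Real.cos_abs, Real.cos_abs, cos_arg (exp_ne_zero _), exp_ofReal_mul_I_re,
    norm_exp_ofReal_mul_I, div_one]

theorem Complex.one_sub_norm_mul_exp_arg (ζ : ℂ) :
    1 - ‖1 - ζ‖ * exp (arg (1 - ζ) * I) = ζ := by
  rw [norm_mul_exp_arg_mul_I]; ring

theorem Complex.norm_one_sub_ofReal_mul_exp_sq (t s : ℝ) :
    ‖1 - t * exp (s * I)‖ ^ 2 = 1 - 2 * t * Real.cos s + t ^ 2 := by
  rw [Complex.sq_norm, exp_mul_I]
  simp only [normSq_apply, sub_re, sub_im, one_re, one_im, mul_re, mul_im, add_re, add_im,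
    ofReal_re, ofReal_im, cos_ofReal_re, sin_ofReal_re, cos_ofReal_im, sin_ofReal_im, I_re, I_im]
  nlinarith [Real.sin_sq_add_cos_sq s]

theorem Complex.norm_one_sub_ofReal_mul_exp_le {t s ψ : ℝ} (ht : 0 ≤ t) (hs : |s| ≤ |ψ|)
    (hψ : |ψ| ≤ π) : ‖1 - t * exp (s * I)‖ ≤ ‖1 - t * exp (ψ * I)‖ := by
  have hcos : Real.cos ψ ≤ Real.cos s := by
    rw [← Real.cos_abs s, ← Real.cos_abs ψ]
    exact Real.cos_le_cos_of_nonneg_of_le_pi (abs_nonneg s) hψ hs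
  rw [← pow_le_pow_iff_left₀ (norm_nonneg _) (norm_nonneg _) two_ne_zero,
    norm_one_sub_ofReal_mul_exp_sq, norm_one_sub_ofReal_mul_exp_sq]
  nlinarith

theorem Complex.norm_cpow_le_rpow_mul_exp (v : ℂ) {c : ℂ} {M : ℝ} (hc : ‖c‖ ≤ M) :
    ‖v ^ c‖ ≤ ‖v‖ ^ c.re * Real.exp (π * M) := by
  refine (norm_cpow_le v c).trans ?_
  rw [div_eq_mul_inv, ← Real.exp_neg]
  gcongr
  calc -(arg v * c.im) ≤ |arg v| * |c.im| := by rw [← abs_mul]; exact neg_le_abs _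
    _ ≤ π * M := mul_le_mul (abs_arg_le_pi v) ((abs_im_le_norm c).trans hc) (abs_nonneg _)
        Real.pi_pos.le

theorem Real.rpow_le_rpow_of_le_of_inv_le {x B e M : ℝ} (hx : 0 < x) (hxB : x ≤ B)
    (hxB' : x⁻¹ ≤ B) (he : |e| ≤ M) : x ^ e ≤ B ^ M := by
  have hB : 0 < B := hx.trans_le hxB
  have hlog : |Real.log x| ≤ Real.log B := abs_le.2
    ⟨by rw [neg_le, ← Real.log_inv]; exact Real.log_le_log (inv_pos.2 hx) hxB',
      Real.log_le_log hx hxB⟩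
  rw [Real.rpow_def_of_pos hx, Real.rpow_def_of_pos hB, Real.exp_le_exp]
  calc Real.log x * e ≤ |Real.log x| * |e| := by rw [← abs_mul]; exact le_abs_self _
    _ ≤ Real.log B * M := mul_le_mul hlog he (abs_nonneg _) ((abs_nonneg _).trans hlog)

theorem Complex.norm_cpow_le_of_le_norm {v c : ℂ} {R η M : ℝ} (hη : 0 < η) (hη1 : η ≤ 1)
    (hR : 0 ≤ R) (hηv : η ≤ ‖v‖) (hvR : ‖v‖ ≤ 1 + R) (hc : ‖c‖ ≤ M) :
    ‖v ^ c‖ ≤ ((1 + R) / η) ^ M * Real.exp (π * M) := by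
  refine (norm_cpow_le_rpow_mul_exp v hc).trans ?_
  gcongr
  refine Real.rpow_le_rpow_of_le_of_inv_le (hη.trans_le hηv) ?_ ?_
    ((abs_re_le_norm c).trans hc)
  · exact hvR.trans (le_div_self (by linarith) hη hη1)
  · calc ‖v‖⁻¹ ≤ η⁻¹ := inv_anti₀ hη hηv
      _ ≤ (1 + R) / η := by rw [inv_eq_one_div]; gcongr; linarith

theorem Real.hasDerivAt_neg_log_rpow {s : ℝ} (p : ℝ) (hs : 0 < s) (hs1 : s < 1) :
    HasDerivAt (fun x => (-Real.log x) ^ p) (p * (-Real.log s) ^ (p - 1) * -s⁻¹) s :=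
  (Real.hasDerivAt_rpow_const (Or.inl (by linarith [Real.log_neg hs hs1]))).comp s
    (Real.hasDerivAt_log hs.ne').neg

theorem Real.rpow_sub_one_le_rpow_min_mul_inv {r s β : ℝ} (hr : 0 < r) (hrs : r ≤ s)
    (hs1 : s ≤ 1) : s ^ (β - 1) ≤ r ^ min β 0 * s⁻¹ := by
  have hs : 0 < s := hr.trans_le hrs
  rw [Real.rpow_sub_one hs.ne', div_eq_mul_inv]
  gcongr
  calc s ^ β ≤ s ^ min β 0 := Real.rpow_le_rpow_of_exponent_ge hs hs1 (min_le_left _ _)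
    _ ≤ r ^ min β 0 := Real.rpow_le_rpow_of_nonpos hr hrs (min_le_right _ _)

theorem Real.rpow_neg_mul_add_le_of_le_half {r a α d X K : ℝ} (hr : 0 < r) (hr2 : r ≤ 1 / 2)
    (hd : 0 ≤ d) (hX : 0 ≤ X) :
    r ^ (-a) * (X + K * r ^ min (a - α) 0 * (-Real.log r) ^ (d + 1)) ≤
      (X / Real.log 2 ^ (d + 1) + K) * r ^ (-max α a) * (-Real.log r) ^ (d + 1) := by
  have hlog2 : 0 < Real.log 2 := Real.log_pos one_lt_two
  have hlog : Real.log 2 ≤ -Real.log r := by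
    rw [← Real.log_inv]; exact Real.log_le_log two_pos (by rw [le_inv_comm₀ two_pos hr]; linarith)
  have h1 : r ^ (-a) ≤ r ^ (-max α a) :=
    Real.rpow_le_rpow_of_exponent_ge hr (by linarith) (neg_le_neg (le_max_right _ _))
  have h2 : r ^ (-a) * r ^ min (a - α) 0 = r ^ (-max α a) := by
    rw [← Real.rpow_add hr]
    congr 1
    rcases le_total α a with h | h
    · rw [min_eq_right (by linarith), max_eq_right h]; ring
    · rw [min_eq_left (by linarith), max_eq_left h]; ring
  have h3 : 1 ≤ (-Real.log r) ^ (d + 1) / Real.log 2 ^ (d + 1) :=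
    (one_le_div (by positivity)).2 (Real.rpow_le_rpow hlog2.le hlog (by linarith))
  calc r ^ (-a) * (X + K * r ^ min (a - α) 0 * (-Real.log r) ^ (d + 1))
      = r ^ (-a) * X * 1 + K * (r ^ (-a) * r ^ min (a - α) 0) * (-Real.log r) ^ (d + 1) := by
        ring
    _ ≤ r ^ (-max α a) * X * ((-Real.log r) ^ (d + 1) / Real.log 2 ^ (d + 1)) +
        K * r ^ (-max α a) * (-Real.log r) ^ (d + 1) := by
        rw [h2]; gcongr
    _ = _ := by ring

theorem norm_mul_add_mul_le {𝕜 : Type*} [NormedRing 𝕜] {c x g : 𝕜} {C₀ : ℝ} (hc : ‖c‖ ≤ C₀) :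
    ‖c * x + x * g‖ ≤ ‖x‖ * (C₀ + ‖g‖) :=
  calc ‖c * x + x * g‖ ≤ ‖c‖ * ‖x‖ + ‖x‖ * ‖g‖ :=
        (norm_add_le _ _).trans (add_le_add (norm_mul_le _ _) (norm_mul_le _ _))
    _ ≤ C₀ * ‖x‖ + ‖x‖ * ‖g‖ := by gcongr
    _ = ‖x‖ * (C₀ + ‖g‖) := by ring

theorem norm_comp_sub_le_of_hasDerivAt {𝕜 : Type*} [NontriviallyNormedField 𝕜]
    [NormedAlgebra ℝ 𝕜] {G G' : 𝕜 → 𝕜} {γ γ' : ℝ → 𝕜} {B B' : ℝ → ℝ} {a b : ℝ}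
    (hab : a ≤ b) (hγ : ∀ s ∈ Icc a b, HasDerivAt γ (γ' s) s)
    (hG : ∀ s ∈ Icc a b, HasDerivAt G (G' (γ s)) (γ s))
    (hB : ∀ s ∈ Icc a b, HasDerivAt B (B' s) s)
    (hbound : ∀ s ∈ Icc a b, ‖G' (γ s) * γ' s‖ ≤ B' s) :
    ‖G (γ b) - G (γ a)‖ ≤ B b - B a := by
  have hF : ∀ s ∈ Icc a b,
      HasDerivAt (fun s => G (γ s) - G (γ a)) (G' (γ s) * γ' s) s :=
    fun s hs => ((hG s hs).comp s (hγ s hs)).sub_const _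
  have hB' : ∀ s ∈ Icc a b, HasDerivAt (fun s => B s - B a) (B' s) s :=
    fun s hs => (hB s hs).sub_const _
  exact image_norm_le_of_norm_deriv_right_le_deriv_boundary'
    (fun s hs => (hF s hs).continuousAt.continuousWithinAt)
    (fun s hs => (hF s (Ico_subset_Icc_self hs)).hasDerivWithinAt) (by simp)
    (fun s hs => (hB' s hs).continuousAt.continuousWithinAt)
    (fun s hs => (hB' s (Ico_subset_Icc_self hs)).hasDerivWithinAt)
    (fun s hs => hbound s (Ico_subset_Icc_self hs)) (right_mem_Icc.2 hab)

theorem norm_comp_one_sub_comp_zero_le {𝕜 : Type*} [NontriviallyNormedField 𝕜]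
    [NormedAlgebra ℝ 𝕜] {G G' : 𝕜 → 𝕜} {γ γ' : ℝ → 𝕜} {C : ℝ}
    (hγ : ∀ s ∈ Icc (0 : ℝ) 1, HasDerivAt γ (γ' s) s)
    (hG : ∀ s ∈ Icc (0 : ℝ) 1, HasDerivAt G (G' (γ s)) (γ s))
    (hbound : ∀ s ∈ Icc (0 : ℝ) 1, ‖G' (γ s) * γ' s‖ ≤ C) :
    ‖G (γ 1) - G (γ 0)‖ ≤ C := by
  simpa using norm_comp_sub_le_of_hasDerivAt zero_le_one hγ hG
    (fun s _ => hasDerivAt_mul_const C) hbound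

section DeltaDomain

variable {R δ : ℝ} {ζ : ℂ}

theorem one_sub_ne_zero_of_mem_deltaDomain (hδ : δ < π / 2) (hζ : ζ ∈ deltaDomain R δ) :
    1 - ζ ≠ 0 := by
  intro h
  have := hζ.2
  rw [show ζ - 1 = 0 by linear_combination -h, arg_zero, abs_zero] at this
  linarith

theorem abs_arg_one_sub_lt_of_mem_deltaDomain (hδ : δ < π / 2) (hζ : ζ ∈ deltaDomain R δ) :
    |arg (1 - ζ)| < π / 2 + δ := by
  have := hζ.2
  rw [show ζ - 1 = -(1 - ζ) by ring, abs_arg_neg (one_sub_ne_zero_of_mem_deltaDomain hδ hζ)]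
    at this
  linarith

theorem one_sub_mem_slitPlane_of_mem_deltaDomain (hδ : δ < π / 2) (hζ : ζ ∈ deltaDomain R δ) :
    1 - ζ ∈ slitPlane := by
  refine mem_slitPlane_iff_arg.2 ⟨fun h => ?_, one_sub_ne_zero_of_mem_deltaDomain hδ hζ⟩
  have := abs_arg_one_sub_lt_of_mem_deltaDomain hδ hζ
  rw [h, abs_of_pos Real.pi_pos] at this
  linarith

theorem norm_one_sub_lt_of_mem_deltaDomain (hζ : ζ ∈ deltaDomain R δ) : ‖1 - ζ‖ < 1 + R :=
  (norm_sub_le _ _).trans_lt (by rw [norm_one]; linarith [hζ.1])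

theorem one_sub_ofReal_mul_exp_mem_deltaDomain {s ψ : ℝ} (hs : 0 < s) (hψπ : |ψ| ≤ π)
    (hψ : |ψ| < π / 2 + δ) (hR : ‖1 - s * exp (ψ * I)‖ < R) :
    1 - s * exp (ψ * I) ∈ deltaDomain R δ := by
  refine ⟨hR, ?_⟩
  rw [sub_sub_cancel_left, abs_arg_neg (mul_ne_zero (ofReal_ne_zero.2 hs.ne') (exp_ne_zero _)),
    abs_arg_ofReal_mul_exp_mul_I hs hψπ]
  linarith

theorem ofReal_mem_deltaDomain {x : ℝ} (hδ : 0 < δ) (hx : x < 1) (hxR : |x| < R) :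
    (x : ℂ) ∈ deltaDomain R δ := by
  refine ⟨by rwa [norm_real, Real.norm_eq_abs], ?_⟩
  rw [← ofReal_one, ← ofReal_sub, arg_ofReal_of_neg (by linarith), abs_of_pos Real.pi_pos]
  linarith [Real.pi_pos]

theorem zero_mem_deltaDomain (hR : 0 < R) (hδ : 0 < δ) : (0 : ℂ) ∈ deltaDomain R δ := by
  simpa using ofReal_mem_deltaDomain (x := 0) hδ one_pos (by simpa using hR)

end DeltaDomain

section Primitive

variable {R δ η M A β d : ℝ} {G G' : ℂ → ℂ} {ζ : ℂ}

theorem norm_sub_le_of_norm_deriv_le_segment (hR : 1 ≤ R) (hδ : 0 < δ) (hη0 : 0 < η)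
    (hη : η ≤ 1)
    (hG : ∀ w ∈ deltaDomain R δ, HasDerivAt G (G' w) w)
    (hG' : ∀ w ∈ deltaDomain R δ, η ≤ ‖1 - w‖ → ‖G' w‖ ≤ M) {t : ℝ} (hηt : η ≤ t)
    (htR : t < 1 + R) : ‖G (1 - t) - G 0‖ ≤ M * (1 + R) := by
  set γ : ℝ → ℂ := fun s => ((s * (1 - t) : ℝ) : ℂ)
  have hmem : ∀ s ∈ Icc (0 : ℝ) 1, γ s ∈ deltaDomain R δ ∧ η ≤ ‖1 - γ s‖ := by
    intro s hs
    have hη' : η ≤ 1 - s * (1 - t) := by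
      nlinarith [mul_le_mul_of_nonneg_left hηt hs.1,
        mul_le_mul_of_nonneg_left hη (sub_nonneg.2 hs.2)]
    refine ⟨ofReal_mem_deltaDomain hδ (by linarith) ?_, ?_⟩
    · rw [abs_mul, abs_of_nonneg hs.1]
      calc s * |1 - t| ≤ |1 - t| := mul_le_of_le_one_left (abs_nonneg _) hs.2
        _ < R := abs_sub_lt_iff.2 ⟨by linarith, by linarith⟩
    · rwa [← ofReal_one, ← ofReal_sub, norm_real, Real.norm_eq_abs, abs_of_pos (by linarith)]
  have h0 := hmem 0 ⟨le_rfl, zero_le_one⟩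
  have hM : 0 ≤ M := (norm_nonneg _).trans (hG' _ h0.1 h0.2)
  have key := norm_comp_one_sub_comp_zero_le (γ := γ) (γ' := fun _ => ((1 - t : ℝ) : ℂ))
    (G' := G') (C := M * (1 + R)) (fun s _ => (hasDerivAt_mul_const (1 - t)).ofReal_comp)
    (fun s hs => hG _ (hmem s hs).1) (fun s hs => by
      rw [norm_mul, norm_real, Real.norm_eq_abs]
      exact mul_le_mul (hG' _ (hmem s hs).1 (hmem s hs).2)
        (abs_le.2 ⟨by linarith, by linarith⟩) (abs_nonneg _) hM)
  simpa [γ] using key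

theorem norm_sub_le_of_norm_deriv_le_arc (hδ : δ < π / 2)
    (hG : ∀ w ∈ deltaDomain R δ, HasDerivAt G (G' w) w)
    (hG' : ∀ w ∈ deltaDomain R δ, η ≤ ‖1 - w‖ → ‖G' w‖ ≤ M) (hζ : ζ ∈ deltaDomain R δ)
    (hηζ : η ≤ ‖1 - ζ‖) : ‖G ζ - G (1 - ‖1 - ζ‖)‖ ≤ M * ((1 + R) * π) := by
  set t := ‖1 - ζ‖
  set ψ := arg (1 - ζ)
  have ht : 0 < t := norm_pos_iff.2 (one_sub_ne_zero_of_mem_deltaDomain hδ hζ)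
  have hψ : |ψ| ≤ π := abs_arg_le_pi _
  set γ : ℝ → ℂ := fun s => 1 - t * exp ((s * ψ : ℝ) * I)
  have hγ : ∀ s : ℝ, HasDerivAt γ (-(t * (exp ((s * ψ : ℝ) * I) * (ψ * I)))) s := fun s =>
    (((hasDerivAt_mul_const ψ).ofReal_comp.mul_const I).cexp.const_mul _).const_sub 1
  have hmem : ∀ s ∈ Icc (0 : ℝ) 1, γ s ∈ deltaDomain R δ ∧ ‖1 - γ s‖ = t := by
    intro s hs
    have hsψ : |s * ψ| ≤ |ψ| := by
      rw [abs_mul, abs_of_nonneg hs.1]; exact mul_le_of_le_one_left (abs_nonneg _) hs.2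
    refine ⟨one_sub_ofReal_mul_exp_mem_deltaDomain ht (hsψ.trans hψ)
      (hsψ.trans_lt (abs_arg_one_sub_lt_of_mem_deltaDomain hδ hζ)) ?_, ?_⟩
    · calc ‖1 - t * exp ((s * ψ : ℝ) * I)‖ ≤ ‖1 - t * exp (ψ * I)‖ :=
            norm_one_sub_ofReal_mul_exp_le ht.le hsψ hψ
        _ < R := by rw [one_sub_norm_mul_exp_arg]; exact hζ.1
    · rw [sub_sub_cancel, norm_mul, norm_real, norm_exp_ofReal_mul_I, mul_one, Real.norm_eq_abs,
        abs_of_pos ht]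
  have hM : 0 ≤ M := (norm_nonneg _).trans (hG' ζ hζ hηζ)
  have key := norm_comp_one_sub_comp_zero_le (G' := G') (C := M * ((1 + R) * π)) (fun s _ => hγ s)
    (fun s hs => hG _ (hmem s hs).1) (fun s hs => by
      rw [norm_mul]
      refine mul_le_mul (hG' _ (hmem s hs).1 ((hmem s hs).2.symm ▸ hηζ)) ?_ (norm_nonneg _) hM
      simp only [norm_neg, norm_mul, norm_real, Real.norm_eq_abs, norm_exp_ofReal_mul_I, norm_I,
        abs_of_pos ht, one_mul, mul_one]
      exact mul_le_mul (norm_one_sub_lt_of_mem_deltaDomain hζ).le hψ (abs_nonneg _)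
        (by linarith [norm_nonneg ζ, hζ.1]))
  simpa [γ, t, ψ, one_sub_norm_mul_exp_arg] using key

theorem norm_le_of_norm_deriv_le_far (hR : 1 ≤ R) (hδ : 0 < δ) (hδ' : δ < π / 2) (hη0 : 0 < η)
    (hη : η ≤ 1) (hG0 : G 0 = 0) (hG : ∀ w ∈ deltaDomain R δ, HasDerivAt G (G' w) w)
    (hG' : ∀ w ∈ deltaDomain R δ, η ≤ ‖1 - w‖ → ‖G' w‖ ≤ M) (hζ : ζ ∈ deltaDomain R δ)
    (hηζ : η ≤ ‖1 - ζ‖) : ‖G ζ‖ ≤ M * ((1 + R) * (1 + π)) :=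
  calc ‖G ζ‖ = ‖(G ζ - G (1 - ‖1 - ζ‖)) + (G (1 - ‖1 - ζ‖) - G 0)‖ := by rw [hG0]; ring_nf
    _ ≤ M * ((1 + R) * π) + M * (1 + R) :=
      (norm_add_le _ _).trans (add_le_add (norm_sub_le_of_norm_deriv_le_arc hδ' hG hG' hζ hηζ)
        (norm_sub_le_of_norm_deriv_le_segment hR hδ hη0 hη hG hG' hηζ
          (norm_one_sub_lt_of_mem_deltaDomain hζ)))
    _ = M * ((1 + R) * (1 + π)) := by ring

theorem norm_le_of_norm_deriv_le_near (hδ : δ < π / 2) (hη : η < 1) (hηR : 1 + η < R)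
    (hd : 0 ≤ d) (hA : 0 ≤ A) (hG : ∀ w ∈ deltaDomain R δ, HasDerivAt G (G' w) w)
    (hG' : ∀ w ∈ deltaDomain R δ, ‖1 - w‖ ≤ η →
      ‖G' w‖ ≤ A * ‖1 - w‖ ^ (β - 1) * (-Real.log ‖1 - w‖) ^ d)
    (hfar : ∀ w ∈ deltaDomain R δ, η ≤ ‖1 - w‖ → ‖G w‖ ≤ M)
    (hζ : ζ ∈ deltaDomain R δ) (hζη : ‖1 - ζ‖ ≤ η) :
    ‖G ζ‖ ≤ M + A / (d + 1) * ‖1 - ζ‖ ^ min β 0 * (-Real.log ‖1 - ζ‖) ^ (d + 1) := by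
  set r := ‖1 - ζ‖
  set u := exp (arg (1 - ζ) * I)
  have hr : 0 < r := norm_pos_iff.2 (one_sub_ne_zero_of_mem_deltaDomain hδ hζ)
  have hu : ‖u‖ = 1 := norm_exp_ofReal_mul_I _
  set K := A * r ^ min β 0
  set γ : ℝ → ℂ := fun s => 1 - s * u
  set B : ℝ → ℝ := fun s => -(K / (d + 1)) * (-Real.log s) ^ (d + 1)
  have hmem : ∀ s ∈ Icc r η, γ s ∈ deltaDomain R δ ∧ ‖1 - γ s‖ = s := by
    intro s hs
    have hs0 : 0 < s := hr.trans_le hs.1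
    have hnorm : ‖(s : ℂ) * u‖ = s := by
      rw [norm_mul, hu, mul_one, norm_real, Real.norm_eq_abs, abs_of_pos hs0]
    refine ⟨one_sub_ofReal_mul_exp_mem_deltaDomain hs0 (abs_arg_le_pi _)
      (abs_arg_one_sub_lt_of_mem_deltaDomain hδ hζ) ?_, by rw [sub_sub_cancel, hnorm]⟩
    calc ‖1 - s * u‖ ≤ ‖(1 : ℂ)‖ + ‖(s : ℂ) * u‖ := norm_sub_le _ _
      _ < R := by rw [norm_one, hnorm]; linarith [hs.2]
  have hB : ∀ s ∈ Icc r η, HasDerivAt B (K * (s⁻¹ * (-Real.log s) ^ d)) s := by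
    intro s hs
    have hs0 : 0 < s := hr.trans_le hs.1
    refine ((Real.hasDerivAt_neg_log_rpow (d + 1) hs0 (by linarith [hs.2])).const_mul
      (-(K / (d + 1)))).congr_deriv ?_
    rw [add_sub_cancel_right]
    field_simp
  have key := norm_comp_sub_le_of_hasDerivAt hζη (γ := γ) (γ' := fun _ => -u) (G' := G') (B := B)
    (fun s _ => by simpa using ((hasDerivAt_id s).ofReal_comp.mul_const u).const_sub 1)
    (fun s hs => hG _ (hmem s hs).1) hB (fun s hs => by
      have hs0 : 0 < s := hr.trans_le hs.1
      have h := hG' _ (hmem s hs).1 ((hmem s hs).2.symm ▸ hs.2)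
      rw [(hmem s hs).2] at h
      rw [norm_mul, norm_neg, hu, mul_one]
      have hlog : 0 ≤ (-Real.log s) ^ d :=
        Real.rpow_nonneg (by linarith [Real.log_nonpos hs0.le (by linarith [hs.2])]) _
      calc ‖G' (γ s)‖ ≤ A * s ^ (β - 1) * (-Real.log s) ^ d := h
        _ ≤ A * (r ^ min β 0 * s⁻¹) * (-Real.log s) ^ d := by
          gcongr; exact Real.rpow_sub_one_le_rpow_min_mul_inv hr hs.1 (by linarith [hs.2])
        _ = K * (s⁻¹ * (-Real.log s) ^ d) := by ring)
  have hγr : γ r = ζ := one_sub_norm_mul_exp_arg ζ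
  have hlogη : 0 ≤ (-Real.log η) ^ (d + 1) :=
    Real.rpow_nonneg (by linarith [Real.log_nonpos (hr.le.trans hζη) hη.le]) _
  rw [hγr] at key
  have hη := hmem η ⟨hζη, le_rfl⟩
  refine (norm_le_norm_add_norm_sub (G (γ η)) (G ζ)).trans (add_le_add (hfar _ hη.1 hη.2.ge) ?_)
  calc _ ≤ B η - B r := key
    _ = K / (d + 1) * (-Real.log r) ^ (d + 1) - K / (d + 1) * (-Real.log η) ^ (d + 1) := by ring
    _ ≤ K / (d + 1) * (-Real.log r) ^ (d + 1) := sub_le_self _ (by positivity)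
    _ = _ := by ring

end Primitive

section Solution

variable {R δ η L Cφ α d C₀ : ℝ} {lam : ℂ} {f : ℂ → ℂ} {ζ : ℂ}

theorem norm_cpow_mul_le_of_le_norm (hη0 : 0 < η) (hη1 : η ≤ 1) (hlam : ‖lam‖ ≤ L)
    (hf : ∀ w ∈ deltaDomain R δ, η ≤ ‖1 - w‖ → ‖f w‖ ≤ Cφ) (hζ : ζ ∈ deltaDomain R δ)
    (hηζ : η ≤ ‖1 - ζ‖) :
    ‖(1 - ζ) ^ (lam - 1) * f ζ‖ ≤ ((1 + R) / η) ^ (L + 1) * Real.exp (π * (L + 1)) * Cφ := by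
  have hR : 0 ≤ R := by linarith [norm_nonneg ζ, hζ.1]
  rw [norm_mul]
  refine mul_le_mul (norm_cpow_le_of_le_norm hη0 hη1 hR hηζ
    (norm_one_sub_lt_of_mem_deltaDomain hζ).le ((norm_sub_le _ _).trans (by simpa using hlam)))
    (hf ζ hζ hηζ) (norm_nonneg _) ?_
  exact mul_nonneg (Real.rpow_nonneg (div_nonneg (by linarith) hη0.le) _) (Real.exp_pos _).le

theorem norm_cpow_mul_le_of_norm_le (hδ : δ < π / 2) (hη1 : η < 1) (hlam : ‖lam‖ ≤ L)
    (hf : ∀ w ∈ deltaDomain R δ, ‖1 - w‖ ≤ η →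
      ‖f w‖ ≤ Cφ * ‖1 - w‖ ^ (-α) * |Real.log ‖1 - w‖| ^ d)
    (hζ : ζ ∈ deltaDomain R δ) (hζη : ‖1 - ζ‖ ≤ η) :
    ‖(1 - ζ) ^ (lam - 1) * f ζ‖ ≤
      Real.exp (π * (L + 1)) * Cφ * ‖1 - ζ‖ ^ ((lam.re - α) - 1) * (-Real.log ‖1 - ζ‖) ^ d := by
  have hr : 0 < ‖1 - ζ‖ := norm_pos_iff.2 (one_sub_ne_zero_of_mem_deltaDomain hδ hζ)
  have hcpow := norm_cpow_le_rpow_mul_exp (1 - ζ) (M := L + 1)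
    ((norm_sub_le lam 1).trans (by rw [norm_one]; linarith))
  rw [sub_re, one_re] at hcpow
  have hfζ := hf ζ hζ hζη
  rw [abs_of_neg (Real.log_neg hr (by linarith))] at hfζ
  calc ‖(1 - ζ) ^ (lam - 1) * f ζ‖
      ≤ (‖1 - ζ‖ ^ (lam.re - 1) * Real.exp (π * (L + 1))) *
          (Cφ * ‖1 - ζ‖ ^ (-α) * (-Real.log ‖1 - ζ‖) ^ d) :=
        (norm_mul_le _ _).trans (mul_le_mul hcpow hfζ (norm_nonneg _) (by positivity))
    _ = _ := by rw [show lam.re - α - 1 = lam.re - 1 + -α by ring, Real.rpow_add hr]; ring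

theorem norm_mul_cpow_add_le_of_le_norm {v c g : ℂ} {M : ℝ} (hη0 : 0 < η) (hη1 : η ≤ 1)
    (hR : 0 ≤ R) (hlam : ‖lam‖ ≤ L) (hc : ‖c‖ ≤ C₀) (hg : ‖g‖ ≤ M) (hηv : η ≤ ‖v‖)
    (hvR : ‖v‖ ≤ 1 + R) :
    ‖c * v ^ (-lam) + v ^ (-lam) * g‖ ≤
      ((1 + R) / η) ^ (L + 1) * Real.exp (π * (L + 1)) * (C₀ + M) :=
  (norm_mul_add_mul_le hc).trans (mul_le_mul
    (norm_cpow_le_of_le_norm hη0 hη1 hR hηv hvR (by rw [norm_neg]; linarith))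
    (add_le_add_right hg _) (by linarith [(norm_nonneg _).trans hc, norm_nonneg g])
    (mul_nonneg (Real.rpow_nonneg (div_nonneg (by linarith) hη0.le) _) (Real.exp_pos _).le))

theorem norm_mul_cpow_add_le_of_norm_le {v c g : ℂ} {M K : ℝ} (hv : 0 < ‖v‖) (hv2 : ‖v‖ ≤ 1 / 2)
    (hd : 0 ≤ d) (hlam : ‖lam‖ ≤ L) (hc : ‖c‖ ≤ C₀) (hM : 0 ≤ M)
    (hg : ‖g‖ ≤ M + K * ‖v‖ ^ min (lam.re - α) 0 * (-Real.log ‖v‖) ^ (d + 1)) :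
    ‖c * v ^ (-lam) + v ^ (-lam) * g‖ ≤
      Real.exp (π * (L + 1)) * ((C₀ + M) / Real.log 2 ^ (d + 1) + K) *
        ‖v‖ ^ (-max α lam.re) * |Real.log ‖v‖| ^ (d + 1) := by
  have hcpow := norm_cpow_le_rpow_mul_exp v (c := -lam) (M := L + 1)
    (by rw [norm_neg]; linarith)
  rw [neg_re] at hcpow
  rw [abs_of_neg (Real.log_neg hv (by linarith))]
  calc ‖c * v ^ (-lam) + v ^ (-lam) * g‖
      ≤ (‖v‖ ^ (-lam.re) * Real.exp (π * (L + 1))) *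
          (C₀ + (M + K * ‖v‖ ^ min (lam.re - α) 0 * (-Real.log ‖v‖) ^ (d + 1))) :=
        (norm_mul_add_mul_le hc).trans (mul_le_mul hcpow (add_le_add_right hg _)
          (by linarith [(norm_nonneg _).trans hc, norm_nonneg g]) (by positivity))
    _ = Real.exp (π * (L + 1)) * (‖v‖ ^ (-lam.re) *
          ((C₀ + M) + K * ‖v‖ ^ min (lam.re - α) 0 * (-Real.log ‖v‖) ^ (d + 1))) := by ring
    _ ≤ Real.exp (π * (L + 1)) * (((C₀ + M) / Real.log 2 ^ (d + 1) + K) *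
          ‖v‖ ^ (-max α lam.re) * (-Real.log ‖v‖) ^ (d + 1)) :=
        mul_le_mul_of_nonneg_left (Real.rpow_neg_mul_add_le_of_le_half hv hv2 hd
          (by linarith [(norm_nonneg _).trans hc])) (Real.exp_pos _).le
    _ = _ := by ring

end Solution

theorem differentiableOn_solution {R δ : ℝ} {lam c : ℂ} {G : ℂ → ℂ} (hδ : δ < π / 2)
    (hG : ∀ w ∈ deltaDomain R δ, DifferentiableAt ℂ G w) :
    DifferentiableOn ℂ (fun ζ => c * (1 - ζ) ^ (-lam) + (1 - ζ) ^ (-lam) * G ζ)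
      (deltaDomain R δ) := fun ζ hζ => by
  have hcpow : DifferentiableAt ℂ (fun ζ : ℂ => (1 - ζ) ^ (-lam)) ζ :=
    ((differentiableAt_const 1).sub differentiableAt_id).cpow (differentiableAt_const _)
      (one_sub_mem_slitPlane_of_mem_deltaDomain hδ hζ)
  exact (((differentiableAt_const c).mul hcpow).add (hcpow.mul (hG ζ hζ))).differentiableWithinAt

theorem stmt18_general (K : Type*) (R δ : ℝ) (hR : 1 < R) (hδ0 : 0 < δ) (hδ1 : δ < π / 2)
    (lam : K → ℂ) (L : ℝ) (hlam : ∀ z, ‖lam z‖ ≤ L)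
    (α d η : ℝ) (hd : 0 ≤ d) (hη0 : 0 < η) (hη1 : η < 1 / 2) (hη2 : η < R - 1)
    (φ : K → ℂ → ℂ)
    (Cφ : ℝ)
    (hφ1 : ∀ z, ∀ ζ ∈ {ζ : ℂ | ‖ζ‖ < R ∧ π / 2 - δ < |Complex.arg (ζ - 1)|},
      η ≤ ‖1 - ζ‖ → ‖φ z ζ‖ ≤ Cφ)
    (hφ2 : ∀ z, ∀ ζ ∈ {ζ : ℂ | ‖ζ‖ < R ∧ π / 2 - δ < |Complex.arg (ζ - 1)|},
      ‖1 - ζ‖ ≤ η →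
      ‖φ z ζ‖ ≤ Cφ * ‖1 - ζ‖ ^ (-α) * |Real.log (‖1 - ζ‖)| ^ d)
    (c : K → ℂ) (C₀ : ℝ) (hc : ∀ z, ‖c z‖ ≤ C₀)
    (g : K → ℂ → ℂ) (hg0 : ∀ z, g z 0 = 0)
    (hg : ∀ z, ∀ ζ ∈ {ζ : ℂ | ‖ζ‖ < R ∧ π / 2 - δ < |Complex.arg (ζ - 1)|},
      HasDerivAt (g z) ((1 - ζ) ^ (lam z - 1) * φ z ζ) ζ) :
    (∀ z, DifferentiableOn ℂ
        (fun ζ => c z * (1 - ζ) ^ (-(lam z)) + (1 - ζ) ^ (-(lam z)) * g z ζ)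
        {ζ : ℂ | ‖ζ‖ < R ∧ π / 2 - δ < |Complex.arg (ζ - 1)|}) ∧
    ∃ C : ℝ, 0 < C ∧
      ∀ z, ∀ ζ ∈ {ζ : ℂ | ‖ζ‖ < R ∧ π / 2 - δ < |Complex.arg (ζ - 1)|},
        (η ≤ ‖1 - ζ‖ →
          ‖c z * (1 - ζ) ^ (-(lam z)) + (1 - ζ) ^ (-(lam z)) * g z ζ‖ ≤ C) ∧
        (‖1 - ζ‖ ≤ η →
          ‖c z * (1 - ζ) ^ (-(lam z)) + (1 - ζ) ^ (-(lam z)) * g z ζ‖ ≤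
            C * ‖1 - ζ‖ ^ (-(max α (lam z).re)) *
              |Real.log (‖1 - ζ‖)| ^ (d + 1)) := by
  refine ⟨fun z => differentiableOn_solution hδ1 fun w hw => (hg z w hw).differentiableAt, ?_⟩
  set E := Real.exp (π * (L + 1))
  set A := ((1 + R) / η) ^ (L + 1) * E
  set M := A * Cφ * ((1 + R) * (1 + π))
  have hgfar : ∀ z, ∀ ζ ∈ deltaDomain R δ, η ≤ ‖1 - ζ‖ → ‖g z ζ‖ ≤ M := fun z _ hζ hηζ =>
    norm_le_of_norm_deriv_le_far hR.le hδ0 hδ1 hη0 (by linarith) (hg0 z) (hg z)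
      (fun w hw hηw => norm_cpow_mul_le_of_le_norm hη0 (by linarith) (hlam z) (hφ1 z) hw hηw)
      hζ hηζ
  refine ⟨max 1 (max (A * (C₀ + M)) (E * ((C₀ + M) / Real.log 2 ^ (d + 1) + E * Cφ / (d + 1)))),
    by positivity, fun z ζ hζ => ⟨fun hηζ => ?_, fun hζη => ?_⟩⟩
  · exact (norm_mul_cpow_add_le_of_le_norm hη0 (by linarith) (by linarith) (hlam z) (hc z)
      (hgfar z ζ hζ hηζ) hηζ (norm_one_sub_lt_of_mem_deltaDomain hζ).le).trans
      (le_max_of_le_right (le_max_left _ _))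
  · have hCφ : 0 ≤ Cφ := (norm_nonneg _).trans
      (hφ1 z 0 (zero_mem_deltaDomain (by linarith) hδ0) (by rw [sub_zero, norm_one]; linarith))
    have hgnear := norm_le_of_norm_deriv_le_near hδ1 (by linarith) (by linarith) hd
      (by positivity) (hg z)
      (fun w hw hwη => norm_cpow_mul_le_of_norm_le hδ1 (by linarith) (hlam z) (hφ2 z) hw hwη)
      (hgfar z) hζ hζη
    refine (norm_mul_cpow_add_le_of_norm_le
      (norm_pos_iff.2 (one_sub_ne_zero_of_mem_deltaDomain hδ1 hζ)) (by linarith) hd (hlam z)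
      (hc z) (by positivity) hgnear).trans ?_
    gcongr
    exact le_max_of_le_right (le_max_right _ _)

/-- Theorem A.1(i), case `r = 1`: on a Δ-domain
`Δ(R,δ) = {ζ : |ζ| < R, |arg(ζ-1)| > π/2 - δ}`, if `λ(z)` is bounded,
`φ_z` is analytic on `Δ` with `φ_z = O(1)` for `|1-ζ| ≥ η` and
`φ_z = O(|1-ζ|^{-α}|log|1-ζ||^d)` for `|1-ζ| ≤ η` uniformly in `z`, and `g_z`
is the primitive of `(1-w)^{λ(z)-1} φ_z(w)` vanishing at `0`, then
`Ψ_z(ζ) = Ψ_z(0)(1-ζ)^{-λ(z)} + (1-ζ)^{-λ(z)} g_z(ζ)` (with `Ψ_z(0) = O(1)`)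
is analytic on `Δ` and satisfies, uniformly in `z` and `ζ ∈ Δ`, `Ψ_z(ζ) = O(1)`
for `|1-ζ| ≥ η` and `Ψ_z(ζ) = O(|1-ζ|^{-max(α, Re λ(z))}|log|1-ζ||^{d+1})`
for `|1-ζ| ≤ η`. -/
theorem stmt18 (K : Type*) (R δ : ℝ) (hR : 1 < R) (hδ0 : 0 < δ) (hδ1 : δ < π / 2)
    (lam : K → ℂ) (L : ℝ) (hlam : ∀ z, ‖lam z‖ ≤ L)
    (α d η : ℝ) (hd : 0 ≤ d) (hη0 : 0 < η) (hη1 : η < 1 / 2) (hη2 : η < R - 1)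
    (φ : K → ℂ → ℂ)
    (hφan : ∀ z, DifferentiableOn ℂ (φ z)
      {ζ : ℂ | ‖ζ‖ < R ∧ π / 2 - δ < |Complex.arg (ζ - 1)|})
    (Cφ : ℝ)
    (hφ1 : ∀ z, ∀ ζ ∈ {ζ : ℂ | ‖ζ‖ < R ∧ π / 2 - δ < |Complex.arg (ζ - 1)|},
      η ≤ ‖1 - ζ‖ → ‖φ z ζ‖ ≤ Cφ)
    (hφ2 : ∀ z, ∀ ζ ∈ {ζ : ℂ | ‖ζ‖ < R ∧ π / 2 - δ < |Complex.arg (ζ - 1)|},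
      ‖1 - ζ‖ ≤ η →
      ‖φ z ζ‖ ≤ Cφ * ‖1 - ζ‖ ^ (-α) * |Real.log (‖1 - ζ‖)| ^ d)
    (c : K → ℂ) (C₀ : ℝ) (hc : ∀ z, ‖c z‖ ≤ C₀)
    (g : K → ℂ → ℂ) (hg0 : ∀ z, g z 0 = 0)
    (hg : ∀ z, ∀ ζ ∈ {ζ : ℂ | ‖ζ‖ < R ∧ π / 2 - δ < |Complex.arg (ζ - 1)|},
      HasDerivAt (g z) ((1 - ζ) ^ (lam z - 1) * φ z ζ) ζ) :
    (∀ z, DifferentiableOn ℂ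
        (fun ζ => c z * (1 - ζ) ^ (-(lam z)) + (1 - ζ) ^ (-(lam z)) * g z ζ)
        {ζ : ℂ | ‖ζ‖ < R ∧ π / 2 - δ < |Complex.arg (ζ - 1)|}) ∧
    ∃ C : ℝ, 0 < C ∧
      ∀ z, ∀ ζ ∈ {ζ : ℂ | ‖ζ‖ < R ∧ π / 2 - δ < |Complex.arg (ζ - 1)|},
        (η ≤ ‖1 - ζ‖ →
          ‖c z * (1 - ζ) ^ (-(lam z)) + (1 - ζ) ^ (-(lam z)) * g z ζ‖ ≤ C) ∧
        (‖1 - ζ‖ ≤ η →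
          ‖c z * (1 - ζ) ^ (-(lam z)) + (1 - ζ) ^ (-(lam z)) * g z ζ‖ ≤
            C * ‖1 - ζ‖ ^ (-(max α (lam z).re)) *
              |Real.log (‖1 - ζ‖)| ^ (d + 1)) :=
  stmt18_general K R δ hR hδ0 hδ1 lam L hlam α d η hd hη0 hη1 hη2 φ Cφ hφ1 hφ2 c C₀ hc g hg0 hg
end
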